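/- arXiv:2509.25009 — 2 statements merged into one kernel-verified Lean document; each statement's English description precedes it below -/
import Mathlib

section
/- Under outcome-independent MAR (Y0 ⊥ R0 | X, A; γ(X,a) = P(R0=1|X,A=a) ∈ (0,1) a.s.), the variance of the difference between the observed-data efficient influence function and the full-data efficient influence function equals E[ (π(X)·Var(Y0|X,A=1)/E[A]^2)·(1-γ(X,1))/γ(X,1) ] + E[ (π(X)^2·Var(Y0|X,A=0)/((1-π(X))·E[A]^2))·(1-γ(X,0))/γ(X,0) ], where the difference is φ(D) - φ_F(D) = -(A/E[A])·(R0/γ(X,1) - 1)·(Y0 - μ0(X,1)) + ((1-A)π(X)/((1-π(X))E[A]))·(R0/γ(X,0) - 1)·(Y0 - μ0(X,0)). -/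
open MeasureTheory

/-- `m ∘ X` is a version of the conditional expectation `E[Y ∣ X]` restricted to the
event `E` (i.e. a version of `E[Y ∣ X, E]`). -/
def IsCondExpOn {Ω 𝒳 : Type*} [MeasurableSpace Ω] [MeasurableSpace 𝒳]
    (μ : MeasureTheory.Measure Ω) (X : Ω → 𝒳) (E : Set Ω) (Y : Ω → ℝ) (m : 𝒳 → ℝ) : Prop :=
  Measurable m ∧ ∀ s : Set 𝒳, MeasurableSet s →
    ∫ ω in E ∩ X ⁻¹' s, Y ω ∂μ = ∫ ω in E ∩ X ⁻¹' s, m (X ω) ∂μ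

open Filter Topology

set_option maxHeartbeats 1000000

lemma key_pullout {Ω 𝒳 : Type*} [m0 : MeasurableSpace Ω] [m𝒳 : MeasurableSpace 𝒳]
    (μ : Measure Ω) [IsFiniteMeasure μ] {X : Ω → 𝒳} (hX : Measurable X)
    {E : Set Ω} {Y : Ω → ℝ} {m g : 𝒳 → ℝ}
    (h : IsCondExpOn μ X E Y m) (hg : Measurable g)
    (hY : IntegrableOn Y E μ)
    (hm : IntegrableOn (fun ω => m (X ω)) E μ)
    (hgY : IntegrableOn (fun ω => g (X ω) * Y ω) E μ) :
    ∫ ω in E, g (X ω) * Y ω ∂μ = ∫ ω in E, g (X ω) * m (X ω) ∂μ := by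
  have hle : m𝒳.comap X ≤ m0 := hX.comap_le
  have hY' : Integrable Y (μ.restrict E) := hY
  have hm' : Integrable (fun ω => m (X ω)) (μ.restrict E) := hm
  have hmeasX : Measurable[m𝒳.comap X] X := Measurable.of_comap_le le_rfl
  have hmX : StronglyMeasurable[m𝒳.comap X] (fun ω => m (X ω)) :=
    (h.1.comp hmeasX).stronglyMeasurable
  have hgXsm : StronglyMeasurable[m𝒳.comap X] (fun ω => g (X ω)) :=
    (hg.comp hmeasX).stronglyMeasurable
  have hcond : (fun ω => m (X ω)) =ᵐ[μ.restrict E] (μ.restrict E)[Y | m𝒳.comap X] := by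
    refine ae_eq_condExp_of_forall_setIntegral_eq hle hY'
      (fun s _ _ => hm'.integrableOn) (fun s hs _ => ?_) hmX.aestronglyMeasurable
    obtain ⟨t, ht, rfl⟩ := hs
    rw [Measure.restrict_restrict (hX ht), Set.inter_comm]
    exact (h.2 t ht).symm
  have hmulint : Integrable ((fun ω => g (X ω)) * Y) (μ.restrict E) := hgY
  calc ∫ ω in E, g (X ω) * Y ω ∂μ
      = ∫ ω, ((μ.restrict E)[(fun ω => g (X ω)) * Y | m𝒳.comap X]) ω ∂(μ.restrict E) :=
        (integral_condExp hle).symm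
    _ = ∫ ω, ((fun ω => g (X ω)) * (μ.restrict E)[Y | m𝒳.comap X]) ω ∂(μ.restrict E) :=
        integral_congr_ae (condExp_mul_of_stronglyMeasurable_left hgXsm hmulint hY')
    _ = ∫ ω in E, g (X ω) * m (X ω) ∂μ := by
        refine integral_congr_ae (hcond.mono fun ω hω => ?_)
        simp only [Pi.mul_apply, hω]

lemma IsCondExpOn.inter_preimage {Ω 𝒳 : Type*} [MeasurableSpace Ω] [MeasurableSpace 𝒳]
    {μ : Measure Ω} {X : Ω → 𝒳} {E : Set Ω} {Y : Ω → ℝ} {m : 𝒳 → ℝ}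
    (h : IsCondExpOn μ X E Y m) {t : Set 𝒳} (ht : MeasurableSet t) :
    IsCondExpOn μ X (E ∩ X ⁻¹' t) Y m :=
  ⟨h.1, fun s hs => by
    rw [Set.inter_assoc, ← Set.preimage_inter]
    exact h.2 (t ∩ s) (ht.inter hs)⟩

lemma intOn_helper {Ω : Type*} [MeasurableSpace Ω] {μ : Measure Ω} {S : Set Ω}
    (hS : MeasurableSet S) {f b : Ω → ℝ} (hb : Integrable b μ)
    (hf : AEStronglyMeasurable f μ) (hle : ∀ ω ∈ S, |f ω| ≤ b ω) :
    IntegrableOn f S μ := by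
  refine Integrable.mono' hb.integrableOn hf.restrict ?_
  rw [ae_restrict_iff' hS]
  exact ae_of_all _ fun ω hω => by simpa [Real.norm_eq_abs] using hle ω hω

lemma arm_main {Ω 𝒳 : Type*} [MeasurableSpace Ω] [MeasurableSpace 𝒳]
    (μ : Measure Ω) [IsProbabilityMeasure μ]
    (X : Ω → 𝒳) (hX : Measurable X)
    (B R0 c : Ω → ℝ) (hB : Measurable B) (hR0m : Measurable R0) (hcm : Measurable c)
    (hBbin : ∀ ω, B ω = 0 ∨ B ω = 1) (hR0bin : ∀ ω, R0 ω = 0 ∨ R0 ω = 1)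
    (hc0 : ∀ ω, 0 ≤ c ω)
    (γ v ρ πB : 𝒳 → ℝ) (hγm : Measurable γ) (hvm : Measurable v) (hρm : Measurable ρ)
    (hπBm : Measurable πB) (hρ0 : ∀ x, 0 ≤ ρ x)
    (hcv : IsCondExpOn μ X {ω | B ω = 1} c v)
    (hRc : IsCondExpOn μ X {ω | B ω = 1} (fun ω => R0 ω * c ω) (fun x => γ x * v x))
    (s : ℕ → Set 𝒳) (hs : ∀ n, MeasurableSet (s n))
    (hsb : ∀ n, ∀ x ∈ s n, 1/((n:ℝ)+1) ≤ γ x ∧ γ x ≤ 1 - 1/((n:ℝ)+1) ∧ |v x| ≤ (n:ℝ)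
      ∧ 1/((n:ℝ)+1)^2 ≤ ρ x ∧ ρ x ≤ ((n:ℝ)+1)^4)
    (hae : ∀ᵐ ω ∂μ, ∀ᶠ n in Filter.atTop, X ω ∈ s n)
    (hTint : Integrable (fun ω => B ω * ρ (X ω) * (R0 ω / γ (X ω) - 1)^2 * c ω) μ)
    (htrans : ∀ g : 𝒳 → ℝ, Measurable g → (∃ C : ℝ, ∀ x, |g x| ≤ C) →
      ∫ ω, B ω * g (X ω) ∂μ = ∫ ω, πB (X ω) * g (X ω) ∂μ)
    (hkint : Integrable (fun ω => πB (X ω) * (ρ (X ω) * v (X ω) * ((1 - γ (X ω)) / γ (X ω)))) μ) :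
    ∫ ω, B ω * ρ (X ω) * (R0 ω / γ (X ω) - 1)^2 * c ω ∂μ
      = ∫ ω, πB (X ω) * (ρ (X ω) * v (X ω) * ((1 - γ (X ω)) / γ (X ω))) ∂μ := by
  have hEmeas : MeasurableSet {ω | B ω = 1} := hB (measurableSet_singleton 1)
  set E : Set Ω := {ω | B ω = 1} with hEdef
  set w : 𝒳 → ℝ := fun x => (1 / γ x - 1)^2 with hwdef
  set f : Ω → ℝ := fun ω => R0 ω * c ω with hfdef
  set T : Ω → ℝ := fun ω => B ω * ρ (X ω) * (R0 ω / γ (X ω) - 1)^2 * c ω with hTdef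
  set k : Ω → ℝ := fun ω => πB (X ω) * (ρ (X ω) * v (X ω) * ((1 - γ (X ω)) / γ (X ω)))
    with hkdef
  set q : 𝒳 → ℝ := fun x => ρ x * v x * ((1 - γ x) / γ x) with hqdef
  have hwm : Measurable w := ((measurable_const.div hγm).sub measurable_const).pow_const 2
  have hfm : Measurable f := hR0m.mul hcm
  have hTm : Measurable T :=
    ((hB.mul (hρm.comp hX)).mul
      (((hR0m.div (hγm.comp hX)).sub measurable_const).pow_const 2)).mul hcm
  have hqm : Measurable q := (hρm.mul hvm).mul ((measurable_const.sub hγm).div hγm)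
  have hkm : Measurable k := (hπBm.comp hX).mul (hqm.comp hX)
  have hB01 : ∀ ω, 0 ≤ B ω ∧ B ω ≤ 1 := by
    intro ω; rcases hBbin ω with h | h <;> rw [h] <;> norm_num
  have hf0 : ∀ ω, 0 ≤ f ω := by
    intro ω
    rcases hR0bin ω with h | h <;> simp [hfdef, h, hc0 ω]
  have hcf0 : ∀ ω, 0 ≤ c ω - f ω := by
    intro ω
    rcases hR0bin ω with h | h <;> simp [hfdef, h, hc0 ω]
  have hT_split : ∀ ω, T ω = B ω * (ρ (X ω) * w (X ω)) * f ω + B ω * ρ (X ω) * (c ω - f ω) := by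
    intro ω
    rcases hR0bin ω with h | h <;>
      simp only [hTdef, hfdef, hwdef, h, zero_div, zero_mul] <;> ring
  have hw0 : ∀ x, (0:ℝ) ≤ w x := fun x => sq_nonneg _
  have hP1nn : ∀ ω, 0 ≤ B ω * (ρ (X ω) * w (X ω)) * f ω := by
    intro ω
    have h1 := (hB01 ω).1; have h2 := hρ0 (X ω); have h3 := hf0 ω; have h4 := hw0 (X ω)
    positivity
  have hP2nn : ∀ ω, 0 ≤ B ω * ρ (X ω) * (c ω - f ω) := by
    intro ω
    have h1 := (hB01 ω).1; have h2 := hρ0 (X ω); have h3 := hcf0 ω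
    positivity
  have hT0 : ∀ ω, 0 ≤ T ω := by
    intro ω; rw [hT_split ω]; exact add_nonneg (hP1nn ω) (hP2nn ω)
  have hP1m : Measurable (fun ω => B ω * (ρ (X ω) * w (X ω)) * f ω) :=
    (hB.mul ((hρm.comp hX).mul (hwm.comp hX))).mul hfm
  have hP1int : Integrable (fun ω => B ω * (ρ (X ω) * w (X ω)) * f ω) μ := by
    refine hTint.mono' hP1m.aestronglyMeasurable (ae_of_all _ fun ω => ?_)
    rw [Real.norm_eq_abs, abs_of_nonneg (hP1nn ω)]
    have := hP2nn ω
    rw [hT_split ω]; linarith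
  -- the per-n identity
  have hstep : ∀ n : ℕ, ∫ ω in X ⁻¹' s n, T ω ∂μ = ∫ ω, ((X ⁻¹' s n).indicator k) ω ∂μ := by
    intro n
    have npos : (0:ℝ) < (n:ℝ) + 1 := by positivity
    -- scalar bounds on s n
    have hxb : ∀ x ∈ s n, 0 < γ x ∧ γ x ≤ 1 ∧ 1/((n:ℝ)+1)^2 ≤ w x ∧ w x ≤ ((n:ℝ)+1)^2
        ∧ (1 - γ x) / γ x ≤ (n:ℝ)+1 ∧ 0 ≤ (1 - γ x) / γ x := by
      intro x hx
      obtain ⟨h1, h2, _, _, _⟩ := hsb n x hx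
      have hγpos : 0 < γ x := lt_of_lt_of_le (by positivity) h1
      have hγle1 : γ x ≤ 1 := by
        have h3 : 0 < 1/((n:ℝ)+1) := by positivity
        linarith
      have h1γ : 1/((n:ℝ)+1) ≤ 1 - γ x := by linarith
      have h1γ0 : 0 ≤ 1 - γ x := le_trans (by positivity) h1γ
      have hdiv : 1/((n:ℝ)+1) ≤ (1 - γ x) / γ x := by
        calc 1/((n:ℝ)+1) ≤ 1 - γ x := h1γ
          _ = (1 - γ x) / 1 := (div_one _).symm
          _ ≤ (1 - γ x) / γ x := div_le_div_of_nonneg_left h1γ0 hγpos hγle1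
      have hdivup : (1 - γ x) / γ x ≤ (n:ℝ)+1 := by
        rw [div_le_iff₀ hγpos]
        have h4 : 1/((n:ℝ)+1) * ((n:ℝ)+1) = 1 := by field_simp
        nlinarith [h1]
      have hweq : w x = ((1 - γ x) / γ x)^2 := by
        have hh : 1 / γ x - 1 = (1 - γ x) / γ x := by field_simp
        simp only [hwdef]
        rw [hh]
      have hdiv0 : (0:ℝ) ≤ (1 - γ x) / γ x := le_trans (by positivity) hdiv
      refine ⟨hγpos, hγle1, ?_, ?_, hdivup, hdiv0⟩
      · rw [hweq]
        have h5 : (1/((n:ℝ)+1))^2 ≤ ((1 - γ x) / γ x)^2 := pow_le_pow_left₀ (by positivity) hdiv 2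
        calc 1/((n:ℝ)+1)^2 = (1/((n:ℝ)+1))^2 := by rw [div_pow, one_pow]
          _ ≤ ((1 - γ x) / γ x)^2 := h5
      · rw [hweq]
        exact pow_le_pow_left₀ hdiv0 hdivup 2
    have hSmeas : MeasurableSet (X ⁻¹' s n) := hX (hs n)
    have hE'meas : MeasurableSet (E ∩ X ⁻¹' s n) := hEmeas.inter hSmeas
    -- pointwise bounds on E ∩ X⁻¹' s n
    have hbd : ∀ ω ∈ E ∩ X ⁻¹' s n,
        ρ (X ω) * c ω ≤ ((n:ℝ)+1)^2 * T ω ∧ c ω ≤ ((n:ℝ)+1)^4 * T ω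
        ∧ f ω ≤ ((n:ℝ)+1)^4 * T ω
        ∧ |ρ (X ω) * (w (X ω) - 1) * f ω| ≤ (((n:ℝ)+1)^2+1) * T ω := by
      intro ω hω
      have hBω : B ω = 1 := hω.1
      have hxω : X ω ∈ s n := hω.2
      obtain ⟨_, _, _, hρl, hρu⟩ := hsb n _ hxω
      obtain ⟨hγp, hγ1, hwl, hwu, _, _⟩ := hxb _ hxω
      have hTval : T ω = ρ (X ω) * w (X ω) * f ω + ρ (X ω) * (c ω - f ω) := by
        rw [hT_split ω, hBω]; ring
      have hρω := hρ0 (X ω); have hfω := hf0 ω; have hcfω := hcf0 ω; have hcω := hc0 ω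
      have hwω := hw0 (X ω)
      have hwge : 1 ≤ ((n:ℝ)+1)^2 * w (X ω) := by
        have h2 : ((n:ℝ)+1)^2 * (1/((n:ℝ)+1)^2) = 1 := by field_simp
        nlinarith [mul_le_mul_of_nonneg_left hwl (le_of_lt (show (0:ℝ) < ((n:ℝ)+1)^2 by positivity))]
      have hρge : 1 ≤ ((n:ℝ)+1)^2 * ρ (X ω) := by
        have h2 : ((n:ℝ)+1)^2 * (1/((n:ℝ)+1)^2) = 1 := by field_simp
        nlinarith [mul_le_mul_of_nonneg_left hρl (le_of_lt (show (0:ℝ) < ((n:ℝ)+1)^2 by positivity))]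
      have hρf : 0 ≤ ρ (X ω) * f ω := mul_nonneg hρω hfω
      have hρcf : 0 ≤ ρ (X ω) * (c ω - f ω) := mul_nonneg hρω hcfω
      have hρwf : 0 ≤ ρ (X ω) * w (X ω) * f ω := mul_nonneg (mul_nonneg hρω hwω) hfω
      -- ρ f ≤ (n+1)^2 ρ w f
      have key1 : ρ (X ω) * f ω ≤ ((n:ℝ)+1)^2 * (ρ (X ω) * w (X ω) * f ω) := by
        nlinarith [mul_le_mul_of_nonneg_left hwge hρf]
      have hn2 : (1:ℝ) ≤ ((n:ℝ)+1)^2 := by nlinarith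
      have hρc : ρ (X ω) * c ω ≤ ((n:ℝ)+1)^2 * T ω := by
        have expand : ρ (X ω) * c ω = ρ (X ω) * f ω + ρ (X ω) * (c ω - f ω) := by ring
        rw [expand, hTval]
        nlinarith [key1, hρcf]
      refine ⟨hρc, ?_, ?_, ?_⟩
      · -- c ≤ (n+1)^2 ρ c ≤ (n+1)^4 T
        have h1 : c ω ≤ ((n:ℝ)+1)^2 * (ρ (X ω) * c ω) := by
          nlinarith [mul_le_mul_of_nonneg_left hρge hcω]
        calc c ω ≤ ((n:ℝ)+1)^2 * (ρ (X ω) * c ω) := h1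
          _ ≤ ((n:ℝ)+1)^2 * (((n:ℝ)+1)^2 * T ω) :=
            mul_le_mul_of_nonneg_left hρc (by positivity)
          _ = ((n:ℝ)+1)^4 * T ω := by ring
      · -- f ≤ (n+1)^4 ρ w f ≤ (n+1)^4 T
        have h1 : f ω ≤ ((n:ℝ)+1)^4 * (ρ (X ω) * w (X ω) * f ω) := by
          have hh : 1 ≤ ((n:ℝ)+1)^4 * (ρ (X ω) * w (X ω)) ∨ f ω = 0 := by
            left
            have := mul_le_mul hρl hwl (by positivity) hρω
            have h2 : ((n:ℝ)+1)^4 * (1/((n:ℝ)+1)^2 * (1/((n:ℝ)+1)^2)) = 1 := by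
              field_simp
            nlinarith [mul_le_mul_of_nonneg_left this
              (le_of_lt (show (0:ℝ) < ((n:ℝ)+1)^4 by positivity))]
          rcases hh with hh | hh
          · nlinarith [mul_le_mul_of_nonneg_left hh hfω]
          · rw [hh]
            nlinarith [hρwf]
        have hTge : ρ (X ω) * w (X ω) * f ω ≤ T ω := by rw [hTval]; linarith
        calc f ω ≤ ((n:ℝ)+1)^4 * (ρ (X ω) * w (X ω) * f ω) := h1
          _ ≤ ((n:ℝ)+1)^4 * T ω := mul_le_mul_of_nonneg_left hTge (by positivity)
      · -- |ρ (w-1) f| ≤ ((n+1)^2+1) T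
        have habs : |ρ (X ω) * (w (X ω) - 1) * f ω| ≤ ρ (X ω) * (w (X ω) + 1) * f ω := by
          rw [abs_mul, abs_mul, abs_of_nonneg hρω, abs_of_nonneg hfω]
          have : |w (X ω) - 1| ≤ w (X ω) + 1 := by
            rw [abs_le]; constructor <;> linarith
          nlinarith [mul_nonneg hρω hfω]
        have hTge : ρ (X ω) * w (X ω) * f ω ≤ T ω := by rw [hTval]; linarith
        calc |ρ (X ω) * (w (X ω) - 1) * f ω| ≤ ρ (X ω) * (w (X ω) + 1) * f ω := habs
          _ = ρ (X ω) * w (X ω) * f ω + ρ (X ω) * f ω := by ring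
          _ ≤ T ω + ((n:ℝ)+1)^2 * T ω := by
            have := le_trans key1 (mul_le_mul_of_nonneg_left hTge
              (le_of_lt (show (0:ℝ) < ((n:ℝ)+1)^2 by positivity)))
            linarith
          _ = (((n:ℝ)+1)^2+1) * T ω := by ring
    -- integrability on E' := E ∩ X⁻¹' s n
    have hi2 : IntegrableOn f (E ∩ X ⁻¹' s n) μ := by
      refine intOn_helper hE'meas (hTint.const_mul (((n:ℝ)+1)^4)) hfm.aestronglyMeasurable
        (fun ω hω => ?_)
      rw [abs_of_nonneg (hf0 ω)]
      exact (hbd ω hω).2.2.1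
    have hi4 : IntegrableOn c (E ∩ X ⁻¹' s n) μ := by
      refine intOn_helper hE'meas (hTint.const_mul (((n:ℝ)+1)^4)) hcm.aestronglyMeasurable
        (fun ω hω => ?_)
      rw [abs_of_nonneg (hc0 ω)]
      exact (hbd ω hω).2.1
    have hi6 : IntegrableOn (fun ω => ρ (X ω) * c ω) (E ∩ X ⁻¹' s n) μ := by
      refine intOn_helper hE'meas (hTint.const_mul (((n:ℝ)+1)^2))
        ((hρm.comp hX).mul hcm).aestronglyMeasurable (fun ω hω => ?_)
      rw [abs_of_nonneg (mul_nonneg (hρ0 _) (hc0 ω))]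
      exact (hbd ω hω).1
    have hi1 : IntegrableOn (fun ω => ρ (X ω) * (w (X ω) - 1) * f ω) (E ∩ X ⁻¹' s n) μ := by
      refine intOn_helper hE'meas (hTint.const_mul ((((n:ℝ)+1)^2+1)))
        (((hρm.comp hX).mul ((hwm.comp hX).sub measurable_const)).mul hfm).aestronglyMeasurable
        (fun ω hω => (hbd ω hω).2.2.2)
    have hi3 : IntegrableOn (fun ω => γ (X ω) * v (X ω)) (E ∩ X ⁻¹' s n) μ := by
      refine intOn_helper hE'meas (integrable_const ((n:ℝ)))
        ((hγm.comp hX).mul (hvm.comp hX)).aestronglyMeasurable (fun ω hω => ?_)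
      obtain ⟨_, _, hv, _, _⟩ := hsb n _ hω.2
      obtain ⟨hγp, hγ1, _, _, _, _⟩ := hxb _ hω.2
      rw [abs_mul, abs_of_nonneg (le_of_lt hγp)]
      nlinarith [abs_nonneg (v (X ω))]
    have hi5 : IntegrableOn (fun ω => v (X ω)) (E ∩ X ⁻¹' s n) μ := by
      refine intOn_helper hE'meas (integrable_const ((n:ℝ)))
        (hvm.comp hX).aestronglyMeasurable (fun ω hω => ?_)
      exact (hsb n _ hω.2).2.2.1
    have hi7 : IntegrableOn (fun ω => ρ (X ω) * (w (X ω) - 1) * (γ (X ω) * v (X ω)))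
        (E ∩ X ⁻¹' s n) μ := by
      refine intOn_helper hE'meas (integrable_const (((n:ℝ)+1)^4 * (((n:ℝ)+1)^2+1) * (n:ℝ)))
        (((hρm.comp hX).mul ((hwm.comp hX).sub measurable_const)).mul
          ((hγm.comp hX).mul (hvm.comp hX))).aestronglyMeasurable (fun ω hω => ?_)
      obtain ⟨_, _, hv, hρl, hρu⟩ := hsb n _ hω.2
      obtain ⟨hγp, hγ1, hwl, hwu, _, _⟩ := hxb _ hω.2
      rw [abs_mul, abs_mul, abs_mul, abs_of_nonneg (hρ0 _), abs_of_nonneg (le_of_lt hγp)]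
      have h1 : |w (X ω) - 1| ≤ ((n:ℝ)+1)^2 + 1 := by
        rw [abs_le]; constructor <;> nlinarith [hw0 (X ω)]
      have h2 : γ (X ω) * |v (X ω)| ≤ (n:ℝ) := by nlinarith [abs_nonneg (v (X ω))]
      have h3 : (0:ℝ) ≤ γ (X ω) * |v (X ω)| := mul_nonneg (le_of_lt hγp) (abs_nonneg _)
      calc ρ (X ω) * |w (X ω) - 1| * (γ (X ω) * |v (X ω)|)
          ≤ ((n:ℝ)+1)^4 * (((n:ℝ)+1)^2+1) * (γ (X ω) * |v (X ω)|) := by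
            apply mul_le_mul_of_nonneg_right _ h3
            nlinarith [abs_nonneg (w (X ω) - 1), hρ0 (X ω)]
        _ ≤ ((n:ℝ)+1)^4 * (((n:ℝ)+1)^2+1) * (n:ℝ) := by
            apply mul_le_mul_of_nonneg_left h2 (by positivity)
    have hi8 : IntegrableOn (fun ω => ρ (X ω) * v (X ω)) (E ∩ X ⁻¹' s n) μ := by
      refine intOn_helper hE'meas (integrable_const (((n:ℝ)+1)^4 * (n:ℝ)))
        ((hρm.comp hX).mul (hvm.comp hX)).aestronglyMeasurable (fun ω hω => ?_)
      obtain ⟨_, _, hv, hρl, hρu⟩ := hsb n _ hω.2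
      rw [abs_mul, abs_of_nonneg (hρ0 _)]
      nlinarith [abs_nonneg (v (X ω)), hρ0 (X ω)]
    -- conditional expectation transfer on E'
    have hRc' : IsCondExpOn μ X (E ∩ X ⁻¹' s n) (fun ω => R0 ω * c ω) (fun x => γ x * v x) :=
      hRc.inter_preimage (hs n)
    have hcv' : IsCondExpOn μ X (E ∩ X ⁻¹' s n) c v := hcv.inter_preimage (hs n)
    have K1 : ∫ ω in E ∩ X ⁻¹' s n, ρ (X ω) * (w (X ω) - 1) * f ω ∂μ
        = ∫ ω in E ∩ X ⁻¹' s n, ρ (X ω) * (w (X ω) - 1) * (γ (X ω) * v (X ω)) ∂μ :=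
      key_pullout μ hX hRc' (hρm.mul (hwm.sub measurable_const)) hi2 hi3 hi1
    have K2 : ∫ ω in E ∩ X ⁻¹' s n, ρ (X ω) * c ω ∂μ
        = ∫ ω in E ∩ X ⁻¹' s n, ρ (X ω) * v (X ω) ∂μ :=
      key_pullout μ hX hcv' hρm hi4 hi5 hi6
    -- assemble
    calc ∫ ω in X ⁻¹' s n, T ω ∂μ
        = ∫ ω in X ⁻¹' s n,
            E.indicator (fun ω => ρ (X ω) * (w (X ω) - 1) * f ω + ρ (X ω) * c ω) ω ∂μ := by
          refine integral_congr_ae (ae_of_all _ fun ω => ?_)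
          by_cases hBω : B ω = 1
          · have hmem : ω ∈ E := hBω
            rw [Set.indicator_of_mem hmem, hT_split ω, hBω]
            ring
          · have hB0 : B ω = 0 := (hBbin ω).resolve_right hBω
            have hnmem : ω ∉ E := fun h => hBω h
            rw [Set.indicator_of_notMem hnmem, hT_split ω, hB0]
            ring
      _ = ∫ ω in X ⁻¹' s n ∩ E,
            (ρ (X ω) * (w (X ω) - 1) * f ω + ρ (X ω) * c ω) ∂μ := by
          rw [setIntegral_indicator hEmeas]
      _ = ∫ ω in E ∩ X ⁻¹' s n,
            (ρ (X ω) * (w (X ω) - 1) * f ω + ρ (X ω) * c ω) ∂μ := by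
          rw [Set.inter_comm]
      _ = (∫ ω in E ∩ X ⁻¹' s n, ρ (X ω) * (w (X ω) - 1) * f ω ∂μ)
          + ∫ ω in E ∩ X ⁻¹' s n, ρ (X ω) * c ω ∂μ := integral_add hi1 hi6
      _ = (∫ ω in E ∩ X ⁻¹' s n, ρ (X ω) * (w (X ω) - 1) * (γ (X ω) * v (X ω)) ∂μ)
          + ∫ ω in E ∩ X ⁻¹' s n, ρ (X ω) * v (X ω) ∂μ := by rw [K1, K2]
      _ = ∫ ω in E ∩ X ⁻¹' s n,
            (ρ (X ω) * (w (X ω) - 1) * (γ (X ω) * v (X ω)) + ρ (X ω) * v (X ω)) ∂μ :=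
          (integral_add hi7 hi8).symm
      _ = ∫ ω in E ∩ X ⁻¹' s n, q (X ω) ∂μ := by
          refine setIntegral_congr_fun hE'meas (fun ω hω => ?_)
          obtain ⟨hγp, hγ1, _, _, _, _⟩ := hxb _ hω.2
          have hγne : γ (X ω) ≠ 0 := ne_of_gt hγp
          simp only [hqdef, hwdef]
          field_simp
          ring
      _ = ∫ ω, B ω * ((s n).indicator q) (X ω) ∂μ := by
          rw [← integral_indicator hE'meas]
          refine integral_congr_ae (ae_of_all _ fun ω => ?_)
          beta_reduce
          by_cases hmem : ω ∈ E ∩ X ⁻¹' s n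
          · rw [Set.indicator_of_mem hmem]
            have hBω : B ω = 1 := hmem.1
            rw [Set.indicator_of_mem (show X ω ∈ s n from hmem.2), hBω, one_mul]
          · rw [Set.indicator_of_notMem hmem]
            by_cases hBω : B ω = 1
            · have hxn : X ω ∉ s n := fun hh => hmem ⟨hBω, hh⟩
              rw [Set.indicator_of_notMem (show X ω ∉ s n from hxn), mul_zero]
            · have hB0 : B ω = 0 := (hBbin ω).resolve_right hBω
              rw [hB0, zero_mul]
      _ = ∫ ω, πB (X ω) * ((s n).indicator q) (X ω) ∂μ := by
          refine htrans _ (hqm.indicator (hs n)) ⟨((n:ℝ)+1)^4 * (n:ℝ) * ((n:ℝ)+1), fun x => ?_⟩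
          by_cases hx : x ∈ s n
          · rw [Set.indicator_of_mem hx]
            obtain ⟨_, _, hv, hρl, hρu⟩ := hsb n x hx
            obtain ⟨hγp, hγ1, _, _, hdu, hd0⟩ := hxb x hx
            simp only [hqdef]
            rw [abs_mul, abs_mul, abs_of_nonneg (hρ0 x), abs_of_nonneg hd0]
            have h1 : ρ x * |v x| ≤ ((n:ℝ)+1)^4 * (n:ℝ) := by
              nlinarith [abs_nonneg (v x), hρ0 x]
            have h2 : (0:ℝ) ≤ ρ x * |v x| := mul_nonneg (hρ0 x) (abs_nonneg _)
            calc ρ x * |v x| * ((1 - γ x) / γ x) ≤ ρ x * |v x| * ((n:ℝ)+1) :=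
                mul_le_mul_of_nonneg_left hdu h2
              _ ≤ ((n:ℝ)+1)^4 * (n:ℝ) * ((n:ℝ)+1) := mul_le_mul_of_nonneg_right h1 (by positivity)
          · rw [Set.indicator_of_notMem hx, abs_zero]
            positivity
      _ = ∫ ω, ((X ⁻¹' s n).indicator k) ω ∂μ := by
          refine integral_congr_ae (ae_of_all _ fun ω => ?_)
          beta_reduce
          by_cases hx : X ω ∈ s n
          · rw [Set.indicator_of_mem hx, Set.indicator_of_mem (by exact hx : ω ∈ X ⁻¹' s n)]
          · rw [Set.indicator_of_notMem hx, mul_zero,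
              Set.indicator_of_notMem (by exact hx : ω ∉ X ⁻¹' s n)]
  -- dominated convergence on both sides
  have hmono : ∀ᵐ ω ∂μ, Tendsto (fun n => ((X ⁻¹' s n).indicator T) ω) atTop (𝓝 (T ω)) := by
    filter_upwards [hae] with ω hω
    refine tendsto_const_nhds.congr' (hω.mono fun n hn => ?_)
    exact (Set.indicator_of_mem (by exact hn : ω ∈ X ⁻¹' s n) T).symm
  have hmono' : ∀ᵐ ω ∂μ, Tendsto (fun n => ((X ⁻¹' s n).indicator k) ω) atTop (𝓝 (k ω)) := by
    filter_upwards [hae] with ω hω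
    refine tendsto_const_nhds.congr' (hω.mono fun n hn => ?_)
    exact (Set.indicator_of_mem (by exact hn : ω ∈ X ⁻¹' s n) k).symm
  have hlim1 : Tendsto (fun n => ∫ ω, ((X ⁻¹' s n).indicator T) ω ∂μ) atTop
      (𝓝 (∫ ω, T ω ∂μ)) := by
    refine tendsto_integral_of_dominated_convergence (fun ω => |T ω|)
      (fun n => (hTm.indicator (hX (hs n))).aestronglyMeasurable) hTint.abs
      (fun n => ae_of_all _ fun ω => ?_) hmono
    rw [Real.norm_eq_abs]
    by_cases h : ω ∈ X ⁻¹' s n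
    · rw [Set.indicator_of_mem h]
    · rw [Set.indicator_of_notMem h, abs_zero]
      exact abs_nonneg _
  have hlim2 : Tendsto (fun n => ∫ ω, ((X ⁻¹' s n).indicator k) ω ∂μ) atTop
      (𝓝 (∫ ω, k ω ∂μ)) := by
    refine tendsto_integral_of_dominated_convergence (fun ω => |k ω|)
      (fun n => (hkm.indicator (hX (hs n))).aestronglyMeasurable) hkint.abs
      (fun n => ae_of_all _ fun ω => ?_) hmono'
    rw [Real.norm_eq_abs]
    by_cases h : ω ∈ X ⁻¹' s n
    · rw [Set.indicator_of_mem h]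
    · rw [Set.indicator_of_notMem h, abs_zero]
      exact abs_nonneg _
  have hstep' : ∀ n : ℕ, ∫ ω, ((X ⁻¹' s n).indicator T) ω ∂μ
      = ∫ ω, ((X ⁻¹' s n).indicator k) ω ∂μ := by
    intro n
    rw [integral_indicator (hX (hs n))]
    exact hstep n
  exact tendsto_nhds_unique ((Filter.tendsto_congr hstep').mp hlim1) hlim2

/-- **Efficiency loss under outcome-independent MAR.** The variance of the difference
`φ(D) - φ_F(D) = -(A/E[A])(R0/γ(X,1) - 1)(Y0 - μ0(X,1))
  + ((1-A)π(X)/((1-π(X))E[A]))(R0/γ(X,0) - 1)(Y0 - μ0(X,0))`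
between the observed-data and full-data efficient influence functions equals
`E[(π(X)·Var(Y0∣X,A=1)/E[A]²)·(1-γ(X,1))/γ(X,1)]
  + E[(π(X)²·Var(Y0∣X,A=0)/((1-π(X))·E[A]²))·(1-γ(X,0))/γ(X,0)]`. -/
theorem efficiency_loss_variance_MAR
    {Ω 𝒳 : Type*} [MeasurableSpace Ω] [MeasurableSpace 𝒳]
    (μ : Measure Ω) [IsProbabilityMeasure μ]
    (X : Ω → 𝒳) (A R0 Y0 : Ω → ℝ)
    (hX : Measurable X) (hA : Measurable A) (hR0 : Measurable R0) (hY0 : Measurable Y0)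
    (hAbin : ∀ ω, A ω = 0 ∨ A ω = 1) (hR0bin : ∀ ω, R0 ω = 0 ∨ R0 ω = 1)
    (hY0sq : MemLp Y0 2 μ)
    -- propensity score π(X) ∈ (0,1) a.s. with E[A] > 0
    (π : 𝒳 → ℝ)
    (hπ : IsCondExpOn μ X Set.univ A π)
    (hπ01 : ∀ᵐ ω ∂μ, 0 < π (X ω) ∧ π (X ω) < 1)
    (EA : ℝ) (hEA : EA = ∫ ω, A ω ∂μ) (hEApos : 0 < EA)
    -- conditional means and missingness probabilities in each arm, with weak overlap
    (m01 m00 γ1 γ0 v1 v0 : 𝒳 → ℝ)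
    (hm01 : IsCondExpOn μ X {ω | A ω = 1} Y0 m01)
    (hm00 : IsCondExpOn μ X {ω | A ω = 0} Y0 m00)
    (hγ1 : IsCondExpOn μ X {ω | A ω = 1} R0 γ1)
    (hγ0 : IsCondExpOn μ X {ω | A ω = 0} R0 γ0)
    (hγ1ol : ∀ᵐ ω ∂μ, 0 < γ1 (X ω) ∧ γ1 (X ω) < 1)
    (hγ0ol : ∀ᵐ ω ∂μ, 0 < γ0 (X ω) ∧ γ0 (X ω) < 1)
    -- conditional variances Var(Y0 ∣ X, A=a)
    (hv1 : IsCondExpOn μ X {ω | A ω = 1} (fun ω => (Y0 ω - m01 (X ω)) ^ 2) v1)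
    (hv0 : IsCondExpOn μ X {ω | A ω = 0} (fun ω => (Y0 ω - m00 (X ω)) ^ 2) v0)
    -- MAR: Y0 ⊥ R0 ∣ (X, A), via the conditional product rules for the centered
    -- first and second moments in each arm
    (hCI1 : IsCondExpOn μ X {ω | A ω = 1} (fun ω => R0 ω * (Y0 ω - m01 (X ω)))
      (fun _ => 0))
    (hCI0 : IsCondExpOn μ X {ω | A ω = 0} (fun ω => R0 ω * (Y0 ω - m00 (X ω)))
      (fun _ => 0))
    (hCI1sq : IsCondExpOn μ X {ω | A ω = 1}
      (fun ω => R0 ω * (Y0 ω - m01 (X ω)) ^ 2) (fun x => γ1 x * v1 x))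
    (hCI0sq : IsCondExpOn μ X {ω | A ω = 0}
      (fun ω => R0 ω * (Y0 ω - m00 (X ω)) ^ 2) (fun x => γ0 x * v0 x))
    -- square-integrability of the difference of influence functions
    (hDsq : Integrable (fun ω =>
      (-(A ω / EA) * (R0 ω / γ1 (X ω) - 1) * (Y0 ω - m01 (X ω))
        + (1 - A ω) * π (X ω) / ((1 - π (X ω)) * EA)
            * (R0 ω / γ0 (X ω) - 1) * (Y0 ω - m00 (X ω))) ^ 2) μ)
    (hI1 : Integrable (fun ω =>
      π (X ω) * v1 (X ω) / EA ^ 2 * ((1 - γ1 (X ω)) / γ1 (X ω))) μ)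
    (hI0 : Integrable (fun ω =>
      π (X ω) ^ 2 * v0 (X ω) / ((1 - π (X ω)) * EA ^ 2)
        * ((1 - γ0 (X ω)) / γ0 (X ω))) μ) :
    ∫ ω, (-(A ω / EA) * (R0 ω / γ1 (X ω) - 1) * (Y0 ω - m01 (X ω))
        + (1 - A ω) * π (X ω) / ((1 - π (X ω)) * EA)
            * (R0 ω / γ0 (X ω) - 1) * (Y0 ω - m00 (X ω))) ^ 2 ∂μ
      = (∫ ω, π (X ω) * v1 (X ω) / EA ^ 2 * ((1 - γ1 (X ω)) / γ1 (X ω)) ∂μ)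
        + ∫ ω, π (X ω) ^ 2 * v0 (X ω) / ((1 - π (X ω)) * EA ^ 2)
            * ((1 - γ0 (X ω)) / γ0 (X ω)) ∂μ := by
  
  have hπm : Measurable π := hπ.1
  have hγ1m : Measurable γ1 := hγ1.1
  have hγ0m : Measurable γ0 := hγ0.1
  have hv1m : Measurable v1 := hv1.1
  have hv0m : Measurable v0 := hv0.1
  have hm01m : Measurable m01 := hm01.1
  have hm00m : Measurable m00 := hm00.1
  have hEAne : EA ≠ 0 := ne_of_gt hEApos
  have hA0 : ∀ ω, 0 ≤ A ω ∧ A ω ≤ 1 := by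
    intro ω; rcases hAbin ω with h | h <;> rw [h] <;> norm_num
  -- abbreviations (purely notational)
  -- D := the difference of influence functions
  -- T1a, T0a := the two nonnegative "arm" integrands
  set D : Ω → ℝ := fun ω =>
      -(A ω / EA) * (R0 ω / γ1 (X ω) - 1) * (Y0 ω - m01 (X ω))
        + (1 - A ω) * π (X ω) / ((1 - π (X ω)) * EA)
            * (R0 ω / γ0 (X ω) - 1) * (Y0 ω - m00 (X ω)) with hDdef
  set T1a : Ω → ℝ := fun ω =>
      A ω * 1 * (R0 ω / γ1 (X ω) - 1) ^ 2 * (Y0 ω - m01 (X ω)) ^ 2 with hT1adef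
  set T0a : Ω → ℝ := fun ω =>
      (1 - A ω) * (π (X ω) / (1 - π (X ω))) ^ 2 * (R0 ω / γ0 (X ω) - 1) ^ 2
        * (Y0 ω - m00 (X ω)) ^ 2 with hT0adef
  -- pointwise decomposition
  have hpt : ∀ ω, (D ω) ^ 2 = (1/EA^2) * T1a ω + (1/EA^2) * T0a ω := by
    intro ω
    rcases hAbin ω with h | h <;>
      simp only [hDdef, hT1adef, hT0adef, h, zero_div, sub_self, zero_mul, neg_zero,
        mul_zero, sub_zero, one_mul, zero_add, add_zero] <;>
    · field_simp
  have hT1a0 : ∀ ω, 0 ≤ T1a ω := by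
    intro ω
    have := (hA0 ω).1
    simp only [hT1adef]
    positivity
  have hT0a0 : ∀ ω, 0 ≤ T0a ω := by
    intro ω
    have h1 : 0 ≤ 1 - A ω := by have := (hA0 ω).2; linarith
    simp only [hT0adef]
    positivity
  have hsum : ∀ ω, EA^2 * (D ω)^2 = T1a ω + T0a ω := by
    intro ω
    rw [hpt ω]
    field_simp
  have hT1am : Measurable T1a :=
    ((hA.mul measurable_const).mul
      (((hR0.div (hγ1m.comp hX)).sub measurable_const).pow_const 2)).mul
      ((hY0.sub (hm01m.comp hX)).pow_const 2)
  have hT0am : Measurable T0a :=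
    (((measurable_const.sub hA).mul
      (((hπm.comp hX).div (measurable_const.sub (hπm.comp hX))).pow_const 2)).mul
      (((hR0.div (hγ0m.comp hX)).sub measurable_const).pow_const 2)).mul
      ((hY0.sub (hm00m.comp hX)).pow_const 2)
  have hDsq' : Integrable (fun ω => (D ω)^2) μ := hDsq
  have hT1aint : Integrable T1a μ := by
    refine (hDsq'.const_mul (EA^2)).mono' hT1am.aestronglyMeasurable
      (ae_of_all _ fun ω => ?_)
    rw [Real.norm_eq_abs, abs_of_nonneg (hT1a0 ω)]
    have := hsum ω; have := hT0a0 ω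
    linarith
  have hT0aint : Integrable T0a μ := by
    refine (hDsq'.const_mul (EA^2)).mono' hT0am.aestronglyMeasurable
      (ae_of_all _ fun ω => ?_)
    rw [Real.norm_eq_abs, abs_of_nonneg (hT0a0 ω)]
    have := hsum ω; have := hT1a0 ω
    linarith
  -- generic transfer of bounded functions of X from B-weights to πB-weights
  have hAint : Integrable A μ := by
    refine (integrable_const (1:ℝ)).mono' hA.aestronglyMeasurable (ae_of_all _ fun ω => ?_)
    rw [Real.norm_eq_abs, abs_le]
    exact ⟨by linarith [(hA0 ω).1], (hA0 ω).2⟩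
  have hπXint : Integrable (fun ω => π (X ω)) μ := by
    refine (integrable_const (1:ℝ)).mono' (hπm.comp hX).aestronglyMeasurable ?_
    filter_upwards [hπ01] with ω hω
    rw [Real.norm_eq_abs, abs_le]
    exact ⟨by linarith [hω.1], le_of_lt hω.2⟩
  have htrans1 : ∀ g : 𝒳 → ℝ, Measurable g → (∃ C : ℝ, ∀ x, |g x| ≤ C) →
      ∫ ω, A ω * g (X ω) ∂μ = ∫ ω, π (X ω) * g (X ω) ∂μ := by
    intro g hg hC
    obtain ⟨C, hC⟩ := hC
    have hgA : Integrable (fun ω => g (X ω) * A ω) μ := by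
      refine (integrable_const C).mono' ((hg.comp hX).mul hA).aestronglyMeasurable
        (ae_of_all _ fun ω => ?_)
      rw [Real.norm_eq_abs, abs_mul]
      have h1 := hC (X ω)
      have h2 : |A ω| ≤ 1 := abs_le.2 ⟨by linarith [(hA0 ω).1], (hA0 ω).2⟩
      calc |g (X ω)| * |A ω| ≤ C * 1 :=
            mul_le_mul h1 h2 (abs_nonneg _) (le_trans (abs_nonneg _) h1)
        _ = C := mul_one C
    have hkey := key_pullout (E := Set.univ) μ hX hπ hg hAint.integrableOn
      hπXint.integrableOn hgA.integrableOn
    simp only [Measure.restrict_univ] at hkey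
    calc ∫ ω, A ω * g (X ω) ∂μ = ∫ ω, g (X ω) * A ω ∂μ :=
          integral_congr_ae (ae_of_all _ fun ω => mul_comm _ _)
      _ = ∫ ω, g (X ω) * π (X ω) ∂μ := hkey
      _ = ∫ ω, π (X ω) * g (X ω) ∂μ :=
          integral_congr_ae (ae_of_all _ fun ω => mul_comm _ _)
  have htrans0 : ∀ g : 𝒳 → ℝ, Measurable g → (∃ C : ℝ, ∀ x, |g x| ≤ C) →
      ∫ ω, (1 - A ω) * g (X ω) ∂μ = ∫ ω, (1 - π (X ω)) * g (X ω) ∂μ := by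
    intro g hg hC
    obtain ⟨C, hC⟩ := hC
    have hgX : Integrable (fun ω => g (X ω)) μ := by
      refine (integrable_const C).mono' (hg.comp hX).aestronglyMeasurable
        (ae_of_all _ fun ω => ?_)
      rw [Real.norm_eq_abs]; exact hC (X ω)
    have hAg : Integrable (fun ω => A ω * g (X ω)) μ := by
      refine (integrable_const C).mono' (hA.mul (hg.comp hX)).aestronglyMeasurable
        (ae_of_all _ fun ω => ?_)
      rw [Real.norm_eq_abs, abs_mul]
      have h1 := hC (X ω)
      have h2 : |A ω| ≤ 1 := abs_le.2 ⟨by linarith [(hA0 ω).1], (hA0 ω).2⟩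
      calc |A ω| * |g (X ω)| ≤ 1 * C :=
            mul_le_mul h2 h1 (abs_nonneg _) zero_le_one
        _ = C := one_mul C
    have hπg : Integrable (fun ω => π (X ω) * g (X ω)) μ := by
      refine (integrable_const C).mono' ((hπm.comp hX).mul (hg.comp hX)).aestronglyMeasurable ?_
      filter_upwards [hπ01] with ω hω
      rw [Real.norm_eq_abs, abs_mul]
      have h1 := hC (X ω)
      have h2 : |π (X ω)| ≤ 1 := abs_le.2 ⟨by linarith [hω.1], le_of_lt hω.2⟩
      calc |π (X ω)| * |g (X ω)| ≤ 1 * C :=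
            mul_le_mul h2 h1 (abs_nonneg _) zero_le_one
        _ = C := one_mul C
    calc ∫ ω, (1 - A ω) * g (X ω) ∂μ
        = ∫ ω, (g (X ω) - A ω * g (X ω)) ∂μ :=
          integral_congr_ae (ae_of_all _ fun ω => by ring)
      _ = (∫ ω, g (X ω) ∂μ) - ∫ ω, A ω * g (X ω) ∂μ := integral_sub hgX hAg
      _ = (∫ ω, g (X ω) ∂μ) - ∫ ω, π (X ω) * g (X ω) ∂μ := by
          rw [htrans1 g hg ⟨C, hC⟩]
      _ = ∫ ω, (g (X ω) - π (X ω) * g (X ω)) ∂μ := (integral_sub hgX hπg).symm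
      _ = ∫ ω, (1 - π (X ω)) * g (X ω) ∂μ :=
          integral_congr_ae (ae_of_all _ fun ω => by ring)
  -- truncation sets for arm 1
  set s1 : ℕ → Set 𝒳 := fun n =>
    {x | 1/((n:ℝ)+1) ≤ γ1 x ∧ γ1 x ≤ 1 - 1/((n:ℝ)+1) ∧ |v1 x| ≤ (n:ℝ)} with hs1def
  have hs1m : ∀ n, MeasurableSet (s1 n) := by
    intro n
    exact (measurableSet_le measurable_const hγ1m).inter
      ((measurableSet_le hγ1m measurable_const).inter
        (measurableSet_le hv1m.abs measurable_const))
  have hs1b : ∀ n, ∀ x ∈ s1 n, 1/((n:ℝ)+1) ≤ γ1 x ∧ γ1 x ≤ 1 - 1/((n:ℝ)+1) ∧ |v1 x| ≤ (n:ℝ)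
      ∧ 1/((n:ℝ)+1)^2 ≤ (fun _ : 𝒳 => (1:ℝ)) x ∧ (fun _ : 𝒳 => (1:ℝ)) x ≤ ((n:ℝ)+1)^4 := by
    intro n x hx
    obtain ⟨h1, h2, h3⟩ := hx
    have hn1 : (1:ℝ) ≤ ((n:ℝ)+1) := by
      have : (0:ℝ) ≤ n := Nat.cast_nonneg n
      linarith
    have h12 : (1:ℝ) ≤ ((n:ℝ)+1)^2 := by nlinarith
    refine ⟨h1, h2, h3, ?_, ?_⟩
    · rw [div_le_one (by positivity)]
      exact h12
    · show (1:ℝ) ≤ ((n:ℝ)+1)^4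
      nlinarith [mul_le_mul_of_nonneg_left h12 (le_of_lt (show (0:ℝ) < ((n:ℝ)+1)^2 by positivity))]
  have hae1 : ∀ᵐ ω ∂μ, ∀ᶠ n in Filter.atTop, X ω ∈ s1 n := by
    filter_upwards [hγ1ol] with ω hω
    obtain ⟨h0, h1⟩ := hω
    obtain ⟨N, hN⟩ := exists_nat_gt (max (1/γ1 (X ω)) (max (1/(1 - γ1 (X ω))) |v1 (X ω)|))
    simp only [max_lt_iff] at hN
    obtain ⟨hN1, hN2, hN3⟩ := hN
    refine Filter.eventually_atTop.2 ⟨N, fun n hn => ?_⟩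
    have hnN : (N:ℝ) ≤ (n:ℝ) := Nat.cast_le.2 hn
    have hb1 : 1/γ1 (X ω) < (n:ℝ) + 1 := by linarith
    have hb2 : 1/(1 - γ1 (X ω)) < (n:ℝ) + 1 := by linarith
    have hb3 : |v1 (X ω)| ≤ (n:ℝ) := by linarith
    have h1γ : 0 < 1 - γ1 (X ω) := by linarith
    refine ⟨?_, ?_, hb3⟩
    · rw [div_le_iff₀ (by positivity : (0:ℝ) < (n:ℝ)+1)]
      have he : γ1 (X ω) * (1/γ1 (X ω)) = 1 := by field_simp
      nlinarith [mul_lt_mul_of_pos_left hb1 h0]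
    · have : 1/((n:ℝ)+1) ≤ 1 - γ1 (X ω) := by
        rw [div_le_iff₀ (by positivity : (0:ℝ) < (n:ℝ)+1)]
        have he : (1 - γ1 (X ω)) * (1/(1 - γ1 (X ω))) = 1 := by field_simp
        nlinarith [mul_lt_mul_of_pos_left hb2 h1γ]
      linarith
  have hkint1 : Integrable (fun ω =>
      π (X ω) * ((fun _ : 𝒳 => (1:ℝ)) (X ω) * v1 (X ω) * ((1 - γ1 (X ω)) / γ1 (X ω)))) μ := by
    refine (hI1.const_mul (EA^2)).congr (ae_of_all _ fun ω => ?_)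
    have hc : EA^2 * (π (X ω) * v1 (X ω) / EA^2) = π (X ω) * v1 (X ω) := by
      field_simp
    show EA ^ 2 * (π (X ω) * v1 (X ω) / EA ^ 2 * ((1 - γ1 (X ω)) / γ1 (X ω)))
        = π (X ω) * (1 * v1 (X ω) * ((1 - γ1 (X ω)) / γ1 (X ω)))
    calc EA ^ 2 * (π (X ω) * v1 (X ω) / EA ^ 2 * ((1 - γ1 (X ω)) / γ1 (X ω)))
        = EA^2 * (π (X ω) * v1 (X ω) / EA^2) * ((1 - γ1 (X ω)) / γ1 (X ω)) := by ring
      _ = π (X ω) * v1 (X ω) * ((1 - γ1 (X ω)) / γ1 (X ω)) := by rw [hc]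
      _ = π (X ω) * (1 * v1 (X ω) * ((1 - γ1 (X ω)) / γ1 (X ω))) := by ring
  have main1 : ∫ ω, T1a ω ∂μ
      = ∫ ω, π (X ω) * ((fun _ : 𝒳 => (1:ℝ)) (X ω) * v1 (X ω) * ((1 - γ1 (X ω)) / γ1 (X ω))) ∂μ := by
    rw [hT1adef]
    exact arm_main μ X hX A R0 (fun ω => (Y0 ω - m01 (X ω)) ^ 2) hA hR0
      ((hY0.sub (hm01m.comp hX)).pow_const 2) hAbin hR0bin (fun ω => sq_nonneg _)
      γ1 v1 (fun _ => 1) π hγ1m hv1m measurable_const hπm (fun _ => zero_le_one)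
      hv1 hCI1sq s1 hs1m hs1b hae1 (by rw [hT1adef] at hT1aint; exact hT1aint) htrans1 hkint1
  -- truncation sets for arm 0
  set s0 : ℕ → Set 𝒳 := fun n =>
    {x | 1/((n:ℝ)+1) ≤ γ0 x ∧ γ0 x ≤ 1 - 1/((n:ℝ)+1) ∧ |v0 x| ≤ (n:ℝ)
      ∧ 1/((n:ℝ)+1) ≤ π x ∧ π x ≤ 1 - 1/((n:ℝ)+1)} with hs0def
  have hs0m : ∀ n, MeasurableSet (s0 n) := by
    intro n
    exact (measurableSet_le measurable_const hγ0m).inter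
      ((measurableSet_le hγ0m measurable_const).inter
        ((measurableSet_le hv0m.abs measurable_const).inter
          ((measurableSet_le measurable_const hπm).inter
            (measurableSet_le hπm measurable_const))))
  have hs0b : ∀ n, ∀ x ∈ s0 n, 1/((n:ℝ)+1) ≤ γ0 x ∧ γ0 x ≤ 1 - 1/((n:ℝ)+1) ∧ |v0 x| ≤ (n:ℝ)
      ∧ 1/((n:ℝ)+1)^2 ≤ (fun y => (π y / (1 - π y))^2) x
      ∧ (fun y => (π y / (1 - π y))^2) x ≤ ((n:ℝ)+1)^4 := by
    intro n x hx
    obtain ⟨h1, h2, h3, h4, h5⟩ := hx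
    have hn1 : (0:ℝ) < ((n:ℝ)+1) := by positivity
    have hπpos : 0 < π x := lt_of_lt_of_le (by positivity) h4
    have h1π : 1/((n:ℝ)+1) ≤ 1 - π x := by linarith
    have h1πpos : 0 < 1 - π x := lt_of_lt_of_le (by positivity) h1π
    have h1πle1 : 1 - π x ≤ 1 := by linarith
    have htlow : 1/((n:ℝ)+1) ≤ π x / (1 - π x) := by
      calc 1/((n:ℝ)+1) ≤ π x := h4
        _ = π x / 1 := (div_one _).symm
        _ ≤ π x / (1 - π x) := div_le_div_of_nonneg_left (le_of_lt hπpos) h1πpos h1πle1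
    have htup : π x / (1 - π x) ≤ (n:ℝ)+1 := by
      have hπle1 : π x ≤ 1 := by
        have : 0 < 1/((n:ℝ)+1) := by positivity
        linarith
      calc π x / (1 - π x) ≤ 1 / (1/((n:ℝ)+1)) :=
            div_le_div₀ zero_le_one hπle1 (by positivity) h1π
        _ = (n:ℝ)+1 := one_div_one_div _
    refine ⟨h1, h2, h3, ?_, ?_⟩
    · simp only []
      calc 1/((n:ℝ)+1)^2 = (1/((n:ℝ)+1))^2 := by rw [div_pow, one_pow]
        _ ≤ (π x / (1 - π x))^2 := pow_le_pow_left₀ (by positivity) htlow 2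
    · simp only []
      have ht0 : 0 ≤ π x / (1 - π x) := le_trans (by positivity) htlow
      have h12 : (1:ℝ) ≤ ((n:ℝ)+1)^2 := by nlinarith [Nat.cast_nonneg (α := ℝ) n]
      calc (π x / (1 - π x))^2 ≤ ((n:ℝ)+1)^2 := pow_le_pow_left₀ ht0 htup 2
        _ ≤ ((n:ℝ)+1)^4 := by
          nlinarith [mul_le_mul_of_nonneg_left h12 (le_of_lt (show (0:ℝ) < ((n:ℝ)+1)^2 by positivity))]
  have hae0 : ∀ᵐ ω ∂μ, ∀ᶠ n in Filter.atTop, X ω ∈ s0 n := by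
    filter_upwards [hγ0ol, hπ01] with ω hω hπω
    obtain ⟨h0, h1⟩ := hω
    obtain ⟨hp0, hp1⟩ := hπω
    obtain ⟨N, hN⟩ := exists_nat_gt (max (max (1/γ0 (X ω)) (1/(1 - γ0 (X ω))))
      (max |v0 (X ω)| (max (1/π (X ω)) (1/(1 - π (X ω))))))
    simp only [max_lt_iff] at hN
    obtain ⟨⟨hN1, hN2⟩, hN3, hN4, hN5⟩ := hN
    refine Filter.eventually_atTop.2 ⟨N, fun n hn => ?_⟩
    have hnN : (N:ℝ) ≤ (n:ℝ) := Nat.cast_le.2 hn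
    have hb1 : 1/γ0 (X ω) < (n:ℝ) + 1 := by linarith
    have hb2 : 1/(1 - γ0 (X ω)) < (n:ℝ) + 1 := by linarith
    have hb3 : |v0 (X ω)| ≤ (n:ℝ) := by linarith
    have hb4 : 1/π (X ω) < (n:ℝ) + 1 := by linarith
    have hb5 : 1/(1 - π (X ω)) < (n:ℝ) + 1 := by linarith
    have h1γ : 0 < 1 - γ0 (X ω) := by linarith
    have h1p : 0 < 1 - π (X ω) := by linarith
    have goal1 : 1/((n:ℝ)+1) ≤ γ0 (X ω) := by
      rw [div_le_iff₀ (by positivity : (0:ℝ) < (n:ℝ)+1)]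
      have he : γ0 (X ω) * (1/γ0 (X ω)) = 1 := by field_simp
      nlinarith [mul_lt_mul_of_pos_left hb1 h0]
    have goal2 : γ0 (X ω) ≤ 1 - 1/((n:ℝ)+1) := by
      have : 1/((n:ℝ)+1) ≤ 1 - γ0 (X ω) := by
        rw [div_le_iff₀ (by positivity : (0:ℝ) < (n:ℝ)+1)]
        have he : (1 - γ0 (X ω)) * (1/(1 - γ0 (X ω))) = 1 := by field_simp
        nlinarith [mul_lt_mul_of_pos_left hb2 h1γ]
      linarith
    have goal4 : 1/((n:ℝ)+1) ≤ π (X ω) := by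
      rw [div_le_iff₀ (by positivity : (0:ℝ) < (n:ℝ)+1)]
      have he : π (X ω) * (1/π (X ω)) = 1 := by field_simp
      nlinarith [mul_lt_mul_of_pos_left hb4 hp0]
    have goal5 : π (X ω) ≤ 1 - 1/((n:ℝ)+1) := by
      have : 1/((n:ℝ)+1) ≤ 1 - π (X ω) := by
        rw [div_le_iff₀ (by positivity : (0:ℝ) < (n:ℝ)+1)]
        have he : (1 - π (X ω)) * (1/(1 - π (X ω))) = 1 := by field_simp
        nlinarith [mul_lt_mul_of_pos_left hb5 h1p]
      linarith
    exact ⟨goal1, goal2, hb3, goal4, goal5⟩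
  have hsetswap : {ω | A ω = 0} = {ω | (1:ℝ) - A ω = 1} := by
    ext ω
    simp [sub_eq_self]
  have hv0' : IsCondExpOn μ X {ω | (1:ℝ) - A ω = 1} (fun ω => (Y0 ω - m00 (X ω)) ^ 2) v0 :=
    hsetswap ▸ hv0
  have hCI0sq' : IsCondExpOn μ X {ω | (1:ℝ) - A ω = 1}
      (fun ω => R0 ω * (Y0 ω - m00 (X ω)) ^ 2) (fun x => γ0 x * v0 x) :=
    hsetswap ▸ hCI0sq
  have hB0bin : ∀ ω, (1:ℝ) - A ω = 0 ∨ (1:ℝ) - A ω = 1 := by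
    intro ω
    rcases hAbin ω with h | h
    · right; rw [h]; ring
    · left; rw [h]; ring
  have hkint0 : Integrable (fun ω =>
      (1 - π (X ω)) * ((fun y => (π y / (1 - π y))^2) (X ω) * v0 (X ω)
        * ((1 - γ0 (X ω)) / γ0 (X ω)))) μ := by
    refine (hI0.const_mul (EA^2)).congr ?_
    filter_upwards [hπ01] with ω hω
    have h1π : (1:ℝ) - π (X ω) ≠ 0 := by
      have := hω.2; intro h; simp only [sub_eq_zero] at h; rw [← h] at this; exact lt_irrefl _ this
    show EA ^ 2 * (π (X ω) ^ 2 * v0 (X ω) / ((1 - π (X ω)) * EA ^ 2) * ((1 - γ0 (X ω)) / γ0 (X ω)))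
        = (1 - π (X ω)) * ((π (X ω) / (1 - π (X ω)))^2 * v0 (X ω) * ((1 - γ0 (X ω)) / γ0 (X ω)))
    have hco : EA^2 * (π (X ω) ^ 2 * v0 (X ω) / ((1 - π (X ω)) * EA ^ 2))
        = (1 - π (X ω)) * ((π (X ω) / (1 - π (X ω)))^2 * v0 (X ω)) := by
      field_simp
    calc EA^2 * (π (X ω) ^ 2 * v0 (X ω) / ((1 - π (X ω)) * EA ^ 2)
          * ((1 - γ0 (X ω)) / γ0 (X ω)))
        = EA^2 * (π (X ω) ^ 2 * v0 (X ω) / ((1 - π (X ω)) * EA ^ 2))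
          * ((1 - γ0 (X ω)) / γ0 (X ω)) := by ring
      _ = (1 - π (X ω)) * ((π (X ω) / (1 - π (X ω)))^2 * v0 (X ω))
          * ((1 - γ0 (X ω)) / γ0 (X ω)) := by rw [hco]
      _ = (1 - π (X ω)) * ((π (X ω) / (1 - π (X ω)))^2 * v0 (X ω)
          * ((1 - γ0 (X ω)) / γ0 (X ω))) := by ring
  have main0 : ∫ ω, T0a ω ∂μ
      = ∫ ω, (1 - π (X ω)) * ((fun y => (π y / (1 - π y))^2) (X ω) * v0 (X ω)
          * ((1 - γ0 (X ω)) / γ0 (X ω))) ∂μ := by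
    rw [hT0adef]
    exact arm_main μ X hX (fun ω => 1 - A ω) R0 (fun ω => (Y0 ω - m00 (X ω)) ^ 2)
      (measurable_const.sub hA) hR0 ((hY0.sub (hm00m.comp hX)).pow_const 2)
      hB0bin hR0bin (fun ω => sq_nonneg _)
      γ0 v0 (fun y => (π y / (1 - π y))^2) (fun y => 1 - π y) hγ0m hv0m
      ((hπm.div (measurable_const.sub hπm)).pow_const 2) (measurable_const.sub hπm)
      (fun y => sq_nonneg _) hv0' hCI0sq' s0 hs0m hs0b hae0
      (by rw [hT0adef] at hT0aint; exact hT0aint) htrans0 hkint0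
  -- final assembly
  have e1 : ∫ ω, π (X ω) * ((fun _ : 𝒳 => (1:ℝ)) (X ω) * v1 (X ω)
        * ((1 - γ1 (X ω)) / γ1 (X ω))) ∂μ
      = EA^2 * ∫ ω, π (X ω) * v1 (X ω) / EA ^ 2 * ((1 - γ1 (X ω)) / γ1 (X ω)) ∂μ := by
    rw [← integral_const_mul]
    refine integral_congr_ae (ae_of_all _ fun ω => ?_)
    have hc : EA^2 * (π (X ω) * v1 (X ω) / EA^2) = π (X ω) * v1 (X ω) := by
      field_simp
    show π (X ω) * (1 * v1 (X ω) * ((1 - γ1 (X ω)) / γ1 (X ω)))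
        = EA ^ 2 * (π (X ω) * v1 (X ω) / EA ^ 2 * ((1 - γ1 (X ω)) / γ1 (X ω)))
    calc π (X ω) * (1 * v1 (X ω) * ((1 - γ1 (X ω)) / γ1 (X ω)))
        = π (X ω) * v1 (X ω) * ((1 - γ1 (X ω)) / γ1 (X ω)) := by ring
      _ = EA^2 * (π (X ω) * v1 (X ω) / EA^2) * ((1 - γ1 (X ω)) / γ1 (X ω)) := by rw [hc]
      _ = EA ^ 2 * (π (X ω) * v1 (X ω) / EA ^ 2 * ((1 - γ1 (X ω)) / γ1 (X ω))) := by ring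
  have e0 : ∫ ω, (1 - π (X ω)) * ((fun y => (π y / (1 - π y))^2) (X ω) * v0 (X ω)
        * ((1 - γ0 (X ω)) / γ0 (X ω))) ∂μ
      = EA^2 * ∫ ω, π (X ω) ^ 2 * v0 (X ω) / ((1 - π (X ω)) * EA ^ 2)
          * ((1 - γ0 (X ω)) / γ0 (X ω)) ∂μ := by
    rw [← integral_const_mul]
    refine integral_congr_ae ?_
    filter_upwards [hπ01] with ω hω
    have h1π : (1:ℝ) - π (X ω) ≠ 0 := by
      have := hω.2; intro h; simp only [sub_eq_zero] at h
      rw [← h] at this; exact lt_irrefl _ this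
    have hco : (1 - π (X ω)) * ((π (X ω) / (1 - π (X ω)))^2 * v0 (X ω))
        = EA^2 * (π (X ω) ^ 2 * v0 (X ω) / ((1 - π (X ω)) * EA ^ 2)) := by
      field_simp
    show (1 - π (X ω)) * ((π (X ω) / (1 - π (X ω)))^2 * v0 (X ω) * ((1 - γ0 (X ω)) / γ0 (X ω)))
        = EA ^ 2 * (π (X ω) ^ 2 * v0 (X ω) / ((1 - π (X ω)) * EA ^ 2)
          * ((1 - γ0 (X ω)) / γ0 (X ω)))
    calc (1 - π (X ω)) * ((π (X ω) / (1 - π (X ω)))^2 * v0 (X ω) * ((1 - γ0 (X ω)) / γ0 (X ω)))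
        = (1 - π (X ω)) * ((π (X ω) / (1 - π (X ω)))^2 * v0 (X ω))
          * ((1 - γ0 (X ω)) / γ0 (X ω)) := by ring
      _ = EA^2 * (π (X ω) ^ 2 * v0 (X ω) / ((1 - π (X ω)) * EA ^ 2))
          * ((1 - γ0 (X ω)) / γ0 (X ω)) := by rw [hco]
      _ = EA ^ 2 * (π (X ω) ^ 2 * v0 (X ω) / ((1 - π (X ω)) * EA ^ 2)
          * ((1 - γ0 (X ω)) / γ0 (X ω))) := by ring
  have hEA2 : ∀ x : ℝ, (1/EA^2) * (EA^2 * x) = x := by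
    intro x
    field_simp
  calc ∫ ω, (D ω) ^ 2 ∂μ
      = ∫ ω, ((1/EA^2) * T1a ω + (1/EA^2) * T0a ω) ∂μ :=
        integral_congr_ae (ae_of_all _ hpt)
    _ = (∫ ω, (1/EA^2) * T1a ω ∂μ) + ∫ ω, (1/EA^2) * T0a ω ∂μ :=
        integral_add (hT1aint.const_mul _) (hT0aint.const_mul _)
    _ = (1/EA^2) * (∫ ω, T1a ω ∂μ) + (1/EA^2) * ∫ ω, T0a ω ∂μ := by
        rw [integral_const_mul, integral_const_mul]
    _ = (∫ ω, π (X ω) * v1 (X ω) / EA ^ 2 * ((1 - γ1 (X ω)) / γ1 (X ω)) ∂μ)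
        + ∫ ω, π (X ω) ^ 2 * v0 (X ω) / ((1 - π (X ω)) * EA ^ 2)
            * ((1 - γ0 (X ω)) / γ0 (X ω)) ∂μ := by
        rw [main1, main0, e1, e0, hEA2, hEA2]
end

section
/- Under the symmetric MAR setting for post-treatment outcomes (Y1 ⊥ R1 | X, A; γ(X,a) = P(R1=1 | X, A=a) ∈ (0,1) a.s.), together with conditional parallel trends, consistency, and positivity, the ATT is identified as θ* = E[ (A/E[A])·( E[Y1 | X, A=1, R1=1] - Y0 - E[Y1 | X, A=0, R1=1] + E[Y0 | X, A=0] ) ]. -/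
open MeasureTheory

namespace AttAux

variable {Ω 𝒳 : Type*} [MeasurableSpace Ω] [M𝒳 : MeasurableSpace 𝒳]

/-- auxiliary bound on the positive part -/
lemma lintegral_pos_part_le
    (μ : Measure Ω) [IsProbabilityMeasure μ] {X : Ω → 𝒳} (hX : Measurable X)
    {E : Set Ω} (hE : MeasurableSet E) {Y : Ω → ℝ}
    (hYi : Integrable (E.indicator Y) μ) {m : 𝒳 → ℝ} (hm : Measurable m)
    (heq : ∀ s : Set 𝒳, MeasurableSet s →
      ∫ ω in E ∩ X ⁻¹' s, Y ω ∂μ = ∫ ω in E ∩ X ⁻¹' s, m (X ω) ∂μ) :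
    ∫⁻ ω, (E ∩ X ⁻¹' (m ⁻¹' Set.Ici (0:ℝ))).indicator
        (fun ω => ENNReal.ofReal (m (X ω))) ω ∂μ
      ≤ ENNReal.ofReal (∫ ω, ‖E.indicator Y ω‖ ∂μ) := by
  set C := ∫ ω, ‖E.indicator Y ω‖ ∂μ with hC
  set T : ℕ → Set Ω := fun n => E ∩ X ⁻¹' (m ⁻¹' Set.Icc (0:ℝ) (n : ℝ)) with hT
  have hTmeas : ∀ n, MeasurableSet (T n) := fun n => hE.inter (hX (hm measurableSet_Icc))
  have hTsub : ∀ n, T n ⊆ E := fun n => Set.inter_subset_left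
  have hint : ∀ n : ℕ, IntegrableOn (fun ω => m (X ω)) (T n) μ := by
    intro n
    refine Integrable.mono' (integrable_const (n : ℝ)) ((hm.comp hX).aestronglyMeasurable) ?_
    refine (ae_restrict_iff' (hTmeas n)).2 (ae_of_all _ fun ω hω => ?_)
    have h1 : m (X ω) ∈ Set.Icc (0:ℝ) (n:ℝ) := hω.2
    rw [Real.norm_eq_abs, abs_of_nonneg h1.1]; exact h1.2
  have hb : ∀ n, (∫⁻ ω in T n, ENNReal.ofReal (m (X ω)) ∂μ) ≤ ENNReal.ofReal C := by
    intro n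
    have hpos : 0 ≤ᵐ[μ.restrict (T n)] fun ω => m (X ω) :=
      (ae_restrict_iff' (hTmeas n)).2 (ae_of_all _ fun ω hω => hω.2.1)
    rw [← ofReal_integral_eq_lintegral_ofReal (hint n) hpos]
    apply ENNReal.ofReal_le_ofReal
    have h1 : ∫ ω in T n, m (X ω) ∂μ = ∫ ω in T n, Y ω ∂μ := (heq _ (hm measurableSet_Icc)).symm
    rw [h1]
    have h2 : ∫ ω in T n, Y ω ∂μ = ∫ ω in T n, E.indicator Y ω ∂μ := by
      refine setIntegral_congr_fun (hTmeas n) fun ω hω => ?_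
      rw [Set.indicator_of_mem (hTsub n hω)]
    rw [h2]
    calc ∫ ω in T n, E.indicator Y ω ∂μ
        ≤ ∫ ω in T n, ‖E.indicator Y ω‖ ∂μ := by
          refine integral_mono hYi.integrableOn hYi.norm.integrableOn fun ω => ?_
          exact le_abs_self _
      _ ≤ C := setIntegral_le_integral hYi.norm (ae_of_all _ fun ω => norm_nonneg _)
  have hgm : ∀ n, Measurable ((T n).indicator (fun ω => ENNReal.ofReal (m (X ω)))) := by
    intro n
    exact ((hm.comp hX).ennreal_ofReal).indicator (hTmeas n)
  have hmono : Monotone (fun n => (T n).indicator (fun ω => ENNReal.ofReal (m (X ω)))) := by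
    intro a b hab
    have hsub : T a ⊆ T b := fun ω hω => ⟨hω.1, hω.2.1, le_trans hω.2.2 (Nat.cast_le.2 hab)⟩
    exact Set.indicator_le_indicator_of_subset hsub (fun _ => zero_le)
  have hsup : ∀ ω, (⨆ n, (T n).indicator (fun ω => ENNReal.ofReal (m (X ω))) ω)
      = (E ∩ X ⁻¹' (m ⁻¹' Set.Ici (0:ℝ))).indicator (fun ω => ENNReal.ofReal (m (X ω))) ω := by
    intro ω
    by_cases hω : ω ∈ E ∩ X ⁻¹' (m ⁻¹' Set.Ici (0:ℝ))
    · obtain ⟨n, hn⟩ := exists_nat_ge (m (X ω))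
      rw [Set.indicator_of_mem hω]
      refine le_antisymm (iSup_le fun k => ?_) (le_iSup_of_le n ?_)
      · by_cases hk : ω ∈ T k
        · rw [Set.indicator_of_mem hk]
        · rw [Set.indicator_of_notMem hk]; exact zero_le
      · have hTn : ω ∈ T n := ⟨hω.1, hω.2, hn⟩
        rw [Set.indicator_of_mem hTn]
    · have hnk : ∀ k, ω ∉ T k := fun k hk => hω ⟨hk.1, hk.2.1⟩
      rw [Set.indicator_of_notMem hω]
      simp only [Set.indicator_of_notMem (hnk _), iSup_const, le_refl]
  calc ∫⁻ ω, (E ∩ X ⁻¹' (m ⁻¹' Set.Ici (0:ℝ))).indicator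
          (fun ω => ENNReal.ofReal (m (X ω))) ω ∂μ
      = ∫⁻ ω, ⨆ n, (T n).indicator (fun ω => ENNReal.ofReal (m (X ω))) ω ∂μ := by
        refine lintegral_congr fun ω => (hsup ω).symm
    _ = ⨆ n, ∫⁻ ω, (T n).indicator (fun ω => ENNReal.ofReal (m (X ω))) ω ∂μ :=
        lintegral_iSup hgm hmono
    _ ≤ ENNReal.ofReal C := by
        refine iSup_le fun n => ?_
        rw [lintegral_indicator (hTmeas n)]
        exact hb n

lemma integrable_of_isCondExpOn
    (μ : Measure Ω) [IsProbabilityMeasure μ] {X : Ω → 𝒳} (hX : Measurable X)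
    {E : Set Ω} (hE : MeasurableSet E) {Y : Ω → ℝ}
    (hYi : Integrable (E.indicator Y) μ) {m : 𝒳 → ℝ}
    (h : IsCondExpOn μ X E Y m) :
    Integrable (E.indicator fun ω => m (X ω)) μ := by
  obtain ⟨hm, heq⟩ := h
  have hYi' : Integrable (E.indicator (fun ω => -Y ω)) μ := by
    refine hYi.neg.congr (ae_of_all _ fun ω => ?_)
    by_cases hω : ω ∈ E
    · simp [Set.indicator_of_mem hω]
    · simp [Set.indicator_of_notMem hω]
  have heq' : ∀ s : Set 𝒳, MeasurableSet s →
      ∫ ω in E ∩ X ⁻¹' s, (-Y ω) ∂μ = ∫ ω in E ∩ X ⁻¹' s, (fun x => -m x) (X ω) ∂μ := by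
    intro s hs
    simp only
    rw [integral_neg, integral_neg, heq s hs]
  have hpos := lintegral_pos_part_le μ hX hE hYi hm heq
  have hneg := lintegral_pos_part_le μ hX hE hYi' (hm.neg) heq'
  constructor
  · exact (((hm.comp hX).indicator hE)).aestronglyMeasurable
  · show (∫⁻ ω, (‖E.indicator (fun ω => m (X ω)) ω‖₊ : ENNReal) ∂μ) < ⊤
    have hle : ∀ ω, (‖E.indicator (fun ω => m (X ω)) ω‖₊ : ENNReal)
        ≤ (E ∩ X ⁻¹' (m ⁻¹' Set.Ici (0:ℝ))).indicator (fun ω => ENNReal.ofReal (m (X ω))) ω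
          + (E ∩ X ⁻¹' ((fun x => -m x) ⁻¹' Set.Ici (0:ℝ))).indicator
              (fun ω => ENNReal.ofReal ((fun x => -m x) (X ω))) ω := by
      intro ω
      by_cases hω : ω ∈ E
      · rw [Set.indicator_of_mem hω]
        rcases le_or_gt 0 (m (X ω)) with hmx | hmx
        · have h1 : ω ∈ E ∩ X ⁻¹' (m ⁻¹' Set.Ici (0:ℝ)) := ⟨hω, hmx⟩
          rw [Set.indicator_of_mem h1]
          refine le_add_of_le_of_nonneg ?_ zero_le
          exact (Real.enorm_eq_ofReal hmx).le
        · have h1 : ω ∈ E ∩ X ⁻¹' ((fun x => -m x) ⁻¹' Set.Ici (0:ℝ)) :=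
            ⟨hω, by simp [le_of_lt hmx]⟩
          rw [Set.indicator_of_mem h1]
          refine le_add_of_nonneg_of_le zero_le ?_
          rw [← nnnorm_neg]; exact (Real.enorm_eq_ofReal (by linarith)).le
      · rw [Set.indicator_of_notMem hω]
        simp
    calc ∫⁻ ω, (‖E.indicator (fun ω => m (X ω)) ω‖₊ : ENNReal) ∂μ
        ≤ ∫⁻ ω, ((E ∩ X ⁻¹' (m ⁻¹' Set.Ici (0:ℝ))).indicator (fun ω => ENNReal.ofReal (m (X ω))) ω
          + (E ∩ X ⁻¹' ((fun x => -m x) ⁻¹' Set.Ici (0:ℝ))).indicator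
              (fun ω => ENNReal.ofReal ((fun x => -m x) (X ω))) ω) ∂μ :=
          lintegral_mono hle
      _ ≤ ENNReal.ofReal (∫ ω, ‖E.indicator Y ω‖ ∂μ)
            + ENNReal.ofReal (∫ ω, ‖E.indicator (fun ω => -Y ω) ω‖ ∂μ) := by
          have hmeas1 : Measurable (fun ω =>
              (E ∩ X ⁻¹' (m ⁻¹' Set.Ici (0:ℝ))).indicator
                (fun ω => ENNReal.ofReal (m (X ω))) ω) :=
            Measurable.indicator (Measurable.ennreal_ofReal (hm.comp hX))
              (hE.inter (hX (hm measurableSet_Ici)))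
          rw [lintegral_add_left hmeas1]
          exact add_le_add hpos hneg
      _ < ⊤ := by
          exact ENNReal.add_lt_top.2 ⟨ENNReal.ofReal_lt_top, ENNReal.ofReal_lt_top⟩

lemma condExp_of_isCondExpOn
    (μ : Measure Ω) [IsProbabilityMeasure μ] {X : Ω → 𝒳} (hX : Measurable X)
    {E : Set Ω} (hE : MeasurableSet E) {Y : Ω → ℝ}
    (hYi : Integrable (E.indicator Y) μ) {m : 𝒳 → ℝ}
    (h : IsCondExpOn μ X E Y m) :
    μ[E.indicator Y | M𝒳.comap X]
      =ᵐ[μ] fun ω => m (X ω) * (μ[E.indicator (fun _ => (1:ℝ)) | M𝒳.comap X]) ω := by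
  have hm := h.1
  have hle : M𝒳.comap X ≤ _ := hX.comap_le
  have hintm : Integrable (E.indicator fun ω => m (X ω)) μ :=
    integrable_of_isCondExpOn μ hX hE hYi h
  have h1 : ∀ s : Set Ω, MeasurableSet[M𝒳.comap X] s →
      ∫ ω in s, E.indicator (fun ω => m (X ω)) ω ∂μ = ∫ ω in s, E.indicator Y ω ∂μ := by
    rintro s ⟨t, ht, rfl⟩
    rw [setIntegral_indicator hE, setIntegral_indicator hE, Set.inter_comm,
      ← h.2 t ht, Set.inter_comm]
  have h2 : μ[E.indicator (fun ω => m (X ω)) | M𝒳.comap X]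
      =ᵐ[μ] μ[E.indicator Y | M𝒳.comap X] :=
    ae_eq_condExp_of_forall_setIntegral_eq hle hYi
      (fun s _ _ => integrable_condExp.integrableOn)
      (fun s hs _ => by rw [setIntegral_condExp hle hintm hs]; exact h1 s hs)
      (stronglyMeasurable_condExp.aestronglyMeasurable)
  have hsm : StronglyMeasurable[M𝒳.comap X] (fun ω => m (X ω)) :=
    (hm.comp (Measurable.of_comap_le le_rfl)).stronglyMeasurable
  have heqf : E.indicator (fun ω => m (X ω))
      = (fun ω => m (X ω)) * E.indicator (fun _ => (1:ℝ)) := by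
    funext ω; by_cases hω : ω ∈ E <;> simp [hω]
  have h3 := condExp_mul_of_stronglyMeasurable_left (μ := μ) hsm
      (by rw [← heqf]; exact hintm) ((integrable_const (1:ℝ)).indicator hE)
  refine h2.symm.trans ?_
  rw [heqf]
  exact h3


lemma condExp_mul_of_isCondExpOn
    (μ : Measure Ω) [IsProbabilityMeasure μ] {X : Ω → 𝒳} (hX : Measurable X)
    {e Y : Ω → ℝ} {m : 𝒳 → ℝ}
    (h : IsCondExpOn μ X {ω | e ω = 1} Y m)
    (he : Measurable e) (hebin : ∀ ω, e ω = 0 ∨ e ω = 1)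
    (hYi : Integrable (fun ω => e ω * Y ω) μ) :
    μ[(fun ω => e ω * Y ω) | M𝒳.comap X]
      =ᵐ[μ] fun ω => m (X ω) * (μ[e | M𝒳.comap X]) ω := by
  have hE : MeasurableSet {ω | e ω = 1} := he (measurableSet_singleton 1)
  have hind : ∀ f : Ω → ℝ, ({ω | e ω = 1}).indicator f = fun ω => e ω * f ω := by
    intro f; funext ω
    rcases hebin ω with h0 | h1
    · rw [Set.indicator_of_notMem (by simp [h0] : ω ∉ {ω | e ω = 1}), h0, zero_mul]
    · rw [Set.indicator_of_mem (by simp [h1] : ω ∈ {ω | e ω = 1}), h1, one_mul]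
  have he1 : (fun ω => e ω * (1:ℝ)) = e := funext fun ω => mul_one _
  have := condExp_of_isCondExpOn μ hX hE (by rw [hind]; exact hYi) h
  rw [hind Y, hind (fun _ => (1:ℝ)), he1] at this
  exact this

end AttAux

/-- **Identification of the ATT with MAR post-treatment outcomes.** Under
conditional parallel trends, consistency, positivity, and MAR of the
post-treatment outcome (`Y1 ⊥ R1 ∣ (X, A)`, `P(R1=1 ∣ X, A=a) ∈ (0,1)` a.s.),
the ATT `θ* = E[Y1(1) - Y1(0) ∣ A = 1]` equals
`E[(A/E[A])·(E[Y1 ∣ X, A=1, R1=1] - Y0 - E[Y1 ∣ X, A=0, R1=1] + E[Y0 ∣ X, A=0])]`. -/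
theorem att_identification_MAR_postTreatment
    {Ω 𝒳 : Type*} [MeasurableSpace Ω] [MeasurableSpace 𝒳]
    (μ : Measure Ω) [IsProbabilityMeasure μ]
    (X : Ω → 𝒳) (A R1 Y0 Y10 Y11 Y1 : Ω → ℝ)
    (hX : Measurable X) (hA : Measurable A) (hR1 : Measurable R1)
    (hY0 : Measurable Y0) (hY10 : Measurable Y10) (hY11 : Measurable Y11)
    (hAbin : ∀ ω, A ω = 0 ∨ A ω = 1) (hR1bin : ∀ ω, R1 ω = 0 ∨ R1 ω = 1)
    (hY0int : Integrable Y0 μ) (hY10int : Integrable Y10 μ) (hY11int : Integrable Y11 μ)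
    -- consistency
    (hcons : ∀ ω, Y1 ω = A ω * Y11 ω + (1 - A ω) * Y10 ω)
    -- positivity
    (π : 𝒳 → ℝ)
    (hπ : IsCondExpOn μ X Set.univ A π)
    (hA1pos : 0 < μ {ω | A ω = 1})
    (hπ01 : ∀ᵐ ω ∂μ, 0 < π (X ω) ∧ π (X ω) < 1)
    -- conditional parallel trends, via a common version mPT
    (mPT : 𝒳 → ℝ)
    (hPT1 : IsCondExpOn μ X {ω | A ω = 1} (fun ω => Y10 ω - Y0 ω) mPT)
    (hPT0 : IsCondExpOn μ X {ω | A ω = 0} (fun ω => Y10 ω - Y0 ω) mPT)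
    -- MAR for the post-treatment outcome: γa is a version of P(R1 = 1 ∣ X, A = a),
    -- weak overlap, and Y1 ⊥ R1 ∣ (X, A) via the conditional product rule,
    -- where mfa is a version of E[Y1 ∣ X, A = a]
    (γ1 γ0 mf1 mf0 : 𝒳 → ℝ)
    (hγ1 : IsCondExpOn μ X {ω | A ω = 1} R1 γ1)
    (hγ0 : IsCondExpOn μ X {ω | A ω = 0} R1 γ0)
    (hγ1ol : ∀ᵐ ω ∂μ, 0 < γ1 (X ω) ∧ γ1 (X ω) < 1)
    (hγ0ol : ∀ᵐ ω ∂μ, 0 < γ0 (X ω) ∧ γ0 (X ω) < 1)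
    (hmf1 : IsCondExpOn μ X {ω | A ω = 1} Y1 mf1)
    (hmf0 : IsCondExpOn μ X {ω | A ω = 0} Y1 mf0)
    (hCI1 : IsCondExpOn μ X {ω | A ω = 1} (fun ω => Y1 ω * R1 ω)
      (fun x => mf1 x * γ1 x))
    (hCI0 : IsCondExpOn μ X {ω | A ω = 0} (fun ω => Y1 ω * R1 ω)
      (fun x => mf0 x * γ0 x))
    -- the observed-data regression functions
    (m11 m10 m00 : 𝒳 → ℝ)
    -- m11 is a version of E[Y1 ∣ X, A = 1, R1 = 1]
    (hm11 : IsCondExpOn μ X ({ω | A ω = 1} ∩ {ω | R1 ω = 1}) Y1 m11)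
    -- m10 is a version of E[Y1 ∣ X, A = 0, R1 = 1]
    (hm10 : IsCondExpOn μ X ({ω | A ω = 0} ∩ {ω | R1 ω = 1}) Y1 m10)
    -- m00 is a version of E[Y0 ∣ X, A = 0]
    (hm00 : IsCondExpOn μ X {ω | A ω = 0} Y0 m00)
    (hint : Integrable (fun ω =>
      A ω * (m11 (X ω) - Y0 ω - m10 (X ω) + m00 (X ω))) μ) :
    (∫ ω in {ω | A ω = 1}, (Y11 ω - Y10 ω) ∂μ) / (μ {ω | A ω = 1}).toReal
      = ∫ ω, A ω / (∫ ω', A ω' ∂μ)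
          * (m11 (X ω) - Y0 ω - m10 (X ω) + m00 (X ω)) ∂μ := by
  classical
  have hle : MeasurableSpace.comap X ‹MeasurableSpace 𝒳› ≤ ‹MeasurableSpace Ω› := hX.comap_le
  have key := fun {e Y : Ω → ℝ} {m : 𝒳 → ℝ}
    (h : IsCondExpOn μ X {ω | e ω = 1} Y m) (he : Measurable e)
    (hebin : ∀ ω, e ω = 0 ∨ e ω = 1) (hYi : Integrable (fun ω => e ω * Y ω) μ) =>
    AttAux.condExp_mul_of_isCondExpOn μ hX h he hebin hYi
  -- measurability and pointwise facts
  have hY1eq : Y1 = fun ω => A ω * Y11 ω + (1 - A ω) * Y10 ω := funext hcons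
  have hY1m : Measurable Y1 := by
    rw [hY1eq]; exact (hA.mul hY11).add ((measurable_const.sub hA).mul hY10)
  have hBmeas : Measurable (fun ω => 1 - A ω) := measurable_const.sub hA
  have hBbin : ∀ ω, (1 - A ω) = 0 ∨ (1 - A ω) = 1 := fun ω => by
    rcases hAbin ω with h | h
    · right; rw [h]; ring
    · left; rw [h]; ring
  have hARmeas : Measurable (fun ω => A ω * R1 ω) := hA.mul hR1
  have hARbin : ∀ ω, A ω * R1 ω = 0 ∨ A ω * R1 ω = 1 := fun ω => by
    rcases hAbin ω with h | h <;> rcases hR1bin ω with h' | h' <;> simp [h, h']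
  have hBRmeas : Measurable (fun ω => (1 - A ω) * R1 ω) := hBmeas.mul hR1
  have hBRbin : ∀ ω, (1 - A ω) * R1 ω = 0 ∨ (1 - A ω) * R1 ω = 1 := fun ω => by
    rcases hBbin ω with h | h <;> rcases hR1bin ω with h' | h' <;> simp [h, h']
  -- integrability helpers
  have hmul : ∀ (e f : Ω → ℝ), Measurable e → (∀ ω, e ω = 0 ∨ e ω = 1) →
      Integrable f μ → Integrable (fun ω => e ω * f ω) μ := by
    intro e f he heb hf
    refine hf.norm.mono' (he.aestronglyMeasurable.mul hf.1) (ae_of_all _ fun ω => ?_)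
    rcases heb ω with h | h
    · simp [h, Real.norm_eq_abs, abs_nonneg]
    · simp [h]
  have hY1int : Integrable Y1 μ := by
    rw [hY1eq]
    exact (hmul A Y11 hA hAbin hY11int).add (hmul _ Y10 hBmeas hBbin hY10int)
  have hY1R1int : Integrable (fun ω => Y1 ω * R1 ω) μ :=
    (hmul R1 Y1 hR1 hR1bin hY1int).congr (ae_of_all _ fun ω => mul_comm _ _)
  have hY10Y0int : Integrable (fun ω => Y10 ω - Y0 ω) μ := hY10int.sub hY0int
  have iA : Integrable A μ := by
    refine (integrable_const (1:ℝ)).mono' hA.aestronglyMeasurable (ae_of_all _ fun ω => ?_)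
    rcases hAbin ω with h | h <;> simp [h]
  have iR1 : Integrable R1 μ := by
    refine (integrable_const (1:ℝ)).mono' hR1.aestronglyMeasurable (ae_of_all _ fun ω => ?_)
    rcases hR1bin ω with h | h <;> simp [h]
  have iAY0 : Integrable (fun ω => A ω * Y0 ω) μ := hmul A Y0 hA hAbin hY0int
  have iAY1 : Integrable (fun ω => A ω * Y1 ω) μ := hmul A Y1 hA hAbin hY1int
  have iAPT : Integrable (fun ω => A ω * (Y10 ω - Y0 ω)) μ := hmul A _ hA hAbin hY10Y0int
  -- set conversions
  have hsetone : {ω : Ω | (1:ℝ) = 1} = Set.univ := by ext ω; simp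
  have hsetB : {ω : Ω | (1 - A ω) = 1} = {ω | A ω = 0} := by
    ext ω; simp only [Set.mem_setOf_eq]; constructor <;> intro h <;> linarith
  have hsetAR : {ω : Ω | A ω * R1 ω = 1} = ({ω | A ω = 1} ∩ {ω | R1 ω = 1}) := by
    ext ω; simp only [Set.mem_setOf_eq, Set.mem_inter_iff]
    rcases hAbin ω with h | h <;> rcases hR1bin ω with h' | h' <;> simp [h, h']
  have hsetBR : {ω : Ω | (1 - A ω) * R1 ω = 1} = ({ω | A ω = 0} ∩ {ω | R1 ω = 1}) := by
    ext ω; simp only [Set.mem_setOf_eq, Set.mem_inter_iff]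
    rcases hAbin ω with h | h <;> rcases hR1bin ω with h' | h' <;> simp [h, h']
  have hπ' : IsCondExpOn μ X {ω : Ω | (1:ℝ) = 1} A π := by rw [hsetone]; exact hπ
  have hPT0' : IsCondExpOn μ X {ω : Ω | (1 - A ω) = 1} (fun ω => Y10 ω - Y0 ω) mPT := by
    rw [hsetB]; exact hPT0
  have hγ0' : IsCondExpOn μ X {ω : Ω | (1 - A ω) = 1} R1 γ0 := by rw [hsetB]; exact hγ0
  have hmf0' : IsCondExpOn μ X {ω : Ω | (1 - A ω) = 1} Y1 mf0 := by rw [hsetB]; exact hmf0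
  have hCI0' : IsCondExpOn μ X {ω : Ω | (1 - A ω) = 1} (fun ω => Y1 ω * R1 ω)
      (fun x => mf0 x * γ0 x) := by rw [hsetB]; exact hCI0
  have hm00' : IsCondExpOn μ X {ω : Ω | (1 - A ω) = 1} Y0 m00 := by rw [hsetB]; exact hm00
  have hm11' : IsCondExpOn μ X {ω : Ω | A ω * R1 ω = 1} Y1 m11 := by rw [hsetAR]; exact hm11
  have hm10' : IsCondExpOn μ X {ω : Ω | (1 - A ω) * R1 ω = 1} Y1 m10 := by
    rw [hsetBR]; exact hm10
  -- conditional expectation facts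
  have cP := key (e := fun _ => (1:ℝ)) hπ' measurable_const (fun _ => Or.inr rfl)
    (by simpa using iA)
  have h1A : (fun ω : Ω => (fun _ : Ω => (1:ℝ)) ω * A ω) = A := funext fun ω => one_mul _
  rw [h1A] at cP
  have hconst := condExp_const (μ := μ) hle (1:ℝ)
  have hP : μ[A | MeasurableSpace.comap X ‹MeasurableSpace 𝒳›] =ᵐ[μ] fun ω => π (X ω) := by
    filter_upwards [cP] with ω h1
    rw [h1, hconst]
    simp
  have hQ : μ[(fun ω => 1 - A ω) | MeasurableSpace.comap X ‹MeasurableSpace 𝒳›]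
      =ᵐ[μ] fun ω => 1 - π (X ω) := by
    have hBfun : (fun ω : Ω => 1 - A ω) = (fun _ : Ω => (1:ℝ)) - A := rfl
    have hsub := condExp_sub (μ := μ) (m := MeasurableSpace.comap X ‹MeasurableSpace 𝒳›)
      (integrable_const (1:ℝ)) iA
    rw [← hBfun] at hsub
    filter_upwards [hsub, hP] with ω h1 h3
    rw [h1]
    simp only [Pi.sub_apply]
    rw [hconst, h3]
  have hF2 := key (e := A) hPT1 hA hAbin iAPT
  have hF4 := key (e := A) hγ1 hA hAbin (hmul A R1 hA hAbin iR1)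
  have hF6 := key (e := A) hmf1 hA hAbin iAY1
  have hF8 := key (e := A) hCI1 hA hAbin (hmul A _ hA hAbin hY1R1int)
  have hF10 := key (e := fun ω => A ω * R1 ω) hm11' hARmeas hARbin
    (hmul _ Y1 hARmeas hARbin hY1int)
  have hG3 := key (e := fun ω => 1 - A ω) hPT0' hBmeas hBbin (hmul _ _ hBmeas hBbin hY10Y0int)
  have hG4 := key (e := fun ω => 1 - A ω) hγ0' hBmeas hBbin (hmul _ R1 hBmeas hBbin iR1)
  have hG7 := key (e := fun ω => 1 - A ω) hmf0' hBmeas hBbin (hmul _ Y1 hBmeas hBbin hY1int)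
  have hG8 := key (e := fun ω => 1 - A ω) hCI0' hBmeas hBbin (hmul _ _ hBmeas hBbin hY1R1int)
  have hG10 := key (e := fun ω => (1 - A ω) * R1 ω) hm10' hBRmeas hBRbin
    (hmul _ Y1 hBRmeas hBRbin hY1int)
  have hG12 := key (e := fun ω => 1 - A ω) hm00' hBmeas hBbin (hmul _ Y0 hBmeas hBbin hY0int)
  have hfun810 : (fun ω => A ω * (Y1 ω * R1 ω)) = (fun ω => A ω * R1 ω * Y1 ω) :=
    funext fun ω => by ring
  rw [hfun810] at hF8
  have hfun810' : (fun ω => (1 - A ω) * (Y1 ω * R1 ω)) = (fun ω => (1 - A ω) * R1 ω * Y1 ω) :=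
    funext fun ω => by ring
  rw [hfun810'] at hG8
  -- mf1 = m11 a.e. along X
  have hmf1m11 : ∀ᵐ ω ∂μ, mf1 (X ω) = m11 (X ω) := by
    filter_upwards [hF8, hF10, hF4, hP, hπ01, hγ1ol] with ω h8 h10 h4 hp hπω hγω
    rw [hp] at h8 h4
    rw [h4] at h10
    have e0 := h8.symm.trans h10
    have e1 : mf1 (X ω) * (γ1 (X ω) * π (X ω)) = m11 (X ω) * (γ1 (X ω) * π (X ω)) := by
      rw [← mul_assoc]; exact e0
    exact mul_right_cancel₀ (ne_of_gt (mul_pos hγω.1 hπω.1)) e1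
  -- mf0 = m10 a.e. along X
  have hmf0m10 : ∀ᵐ ω ∂μ, mf0 (X ω) = m10 (X ω) := by
    filter_upwards [hG8, hG10, hG4, hQ, hπ01, hγ0ol] with ω h8 h10 h4 hq hπω hγω
    rw [hq] at h8 h4
    rw [h4] at h10
    have e0 := h8.symm.trans h10
    have e1 : mf0 (X ω) * (γ0 (X ω) * (1 - π (X ω)))
        = m10 (X ω) * (γ0 (X ω) * (1 - π (X ω))) := by
      rw [← mul_assoc]; exact e0
    have hne : γ0 (X ω) * (1 - π (X ω)) ≠ 0 :=
      ne_of_gt (mul_pos hγω.1 (by linarith [hπω.2]))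
    exact mul_right_cancel₀ hne e1
  -- parallel trends: mPT = m10 - m00 a.e. along X
  have hBY1eq : (fun ω => (1 - A ω) * Y1 ω) = (fun ω => (1 - A ω) * Y10 ω) := by
    funext ω; rcases hAbin ω with h | h <;> rw [hcons ω, h] <;> ring
  rw [hBY1eq] at hG7
  have hsplitB : (fun ω => (1 - A ω) * (Y10 ω - Y0 ω))
      = (fun ω => (1 - A ω) * Y10 ω) - (fun ω => (1 - A ω) * Y0 ω) := by
    funext ω; simp only [Pi.sub_apply]; ring
  rw [hsplitB] at hG3
  have hGsub := condExp_sub (μ := μ) (m := MeasurableSpace.comap X ‹MeasurableSpace 𝒳›)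
    (hmul _ Y10 hBmeas hBbin hY10int) (hmul _ Y0 hBmeas hBbin hY0int)
  have hmPT : ∀ᵐ ω ∂μ, mPT (X ω) = m10 (X ω) - m00 (X ω) := by
    filter_upwards [hG3, hGsub, hG7, hG12, hQ, hπ01, hmf0m10] with ω h3 hsub h7 h12 hq hπω hmm
    simp only [Pi.sub_apply] at h3 hsub h7 h12 hq
    have hqpos : 0 < (μ[(fun ω => 1 - A ω) | MeasurableSpace.comap X ‹MeasurableSpace 𝒳›]) ω := by
      rw [hq]; linarith [hπω.2]
    refine mul_right_cancel₀ (ne_of_gt hqpos) ?_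
    rw [sub_mul, ← hmm, ← h7, ← h12, ← hsub, h3]
  -- upgraded versions of the treated-arm facts
  have hF6' : μ[(fun ω => A ω * Y1 ω) | MeasurableSpace.comap X ‹MeasurableSpace 𝒳›]
      =ᵐ[μ] fun ω => m11 (X ω) * (μ[A | MeasurableSpace.comap X ‹MeasurableSpace 𝒳›]) ω := by
    filter_upwards [hF6, hmf1m11] with ω h6 hm
    rw [h6, hm]
  have hF2' : μ[(fun ω => A ω * (Y10 ω - Y0 ω)) | MeasurableSpace.comap X ‹MeasurableSpace 𝒳›]
      =ᵐ[μ] fun ω => (m10 (X ω) - m00 (X ω))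
        * (μ[A | MeasurableSpace.comap X ‹MeasurableSpace 𝒳›]) ω := by
    filter_upwards [hF2, hmPT] with ω h2 hm
    rw [h2, hm]
  have I1 : Integrable (fun ω => m11 (X ω)
      * (μ[A | MeasurableSpace.comap X ‹MeasurableSpace 𝒳›]) ω) μ :=
    integrable_condExp.congr hF6'
  have I2 : Integrable (fun ω => (m10 (X ω) - m00 (X ω))
      * (μ[A | MeasurableSpace.comap X ‹MeasurableSpace 𝒳›]) ω) μ :=
    integrable_condExp.congr hF2'
  have hN1 : ∫ ω, A ω * Y1 ω ∂μ = ∫ ω, m11 (X ω)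
      * (μ[A | MeasurableSpace.comap X ‹MeasurableSpace 𝒳›]) ω ∂μ :=
    (integral_condExp hle).symm.trans (integral_congr_ae hF6')
  have hN2 : ∫ ω, A ω * (Y10 ω - Y0 ω) ∂μ = ∫ ω, (m10 (X ω) - m00 (X ω))
      * (μ[A | MeasurableSpace.comap X ‹MeasurableSpace 𝒳›]) ω ∂μ :=
    (integral_condExp hle).symm.trans (integral_congr_ae hF2')
  -- pull-out for the observed-data regression functions
  have hXc : Measurable[MeasurableSpace.comap X ‹MeasurableSpace 𝒳›] X := fun _ ht => ⟨_, ht, rfl⟩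
  have hsmg : StronglyMeasurable[MeasurableSpace.comap X ‹MeasurableSpace 𝒳›]
      (fun ω => m11 (X ω) - m10 (X ω) + m00 (X ω)) :=
    (((hm11.1.comp hXc).sub (hm10.1.comp hXc)).add (hm00.1.comp hXc)).stronglyMeasurable
  have hfg' : Integrable (fun ω => (m11 (X ω) - m10 (X ω) + m00 (X ω)) * A ω) μ :=
    (hint.add iAY0).congr (ae_of_all _ fun ω => by simp only [Pi.add_apply]; ring)
  have hg' : μ[(fun ω => (m11 (X ω) - m10 (X ω) + m00 (X ω)) * A ω)
        | MeasurableSpace.comap X ‹MeasurableSpace 𝒳›]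
      =ᵐ[μ] fun ω => (m11 (X ω) - m10 (X ω) + m00 (X ω))
        * (μ[A | MeasurableSpace.comap X ‹MeasurableSpace 𝒳›]) ω :=
    condExp_mul_of_stronglyMeasurable_left (μ := μ) hsmg hfg' iA
  have hRHS1 : ∫ ω, (m11 (X ω) - m10 (X ω) + m00 (X ω)) * A ω ∂μ
      = ∫ ω, (m11 (X ω) - m10 (X ω) + m00 (X ω))
        * (μ[A | MeasurableSpace.comap X ‹MeasurableSpace 𝒳›]) ω ∂μ :=
    (integral_condExp hle).symm.trans (integral_congr_ae hg')
  -- assembling the numerators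
  have hA1meas : MeasurableSet {ω : Ω | A ω = 1} := hA (measurableSet_singleton 1)
  have hLHSnum : ∫ ω in {ω | A ω = 1}, (Y11 ω - Y10 ω) ∂μ
      = ∫ ω, A ω * (Y11 ω - Y10 ω) ∂μ := by
    rw [← integral_indicator hA1meas]
    refine integral_congr_ae (ae_of_all _ fun ω => ?_)
    show Set.indicator {ω : Ω | A ω = 1} (fun ω => Y11 ω - Y10 ω) ω = A ω * (Y11 ω - Y10 ω)
    rcases hAbin ω with h | h
    · rw [Set.indicator_of_notMem (by simp [h] : ω ∉ {ω : Ω | A ω = 1}), h, zero_mul]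
    · rw [Set.indicator_of_mem (by simp [h] : ω ∈ {ω : Ω | A ω = 1}), h, one_mul]
  have hdecomp : (fun ω => A ω * (Y11 ω - Y10 ω))
      = fun ω => (A ω * Y1 ω - A ω * (Y10 ω - Y0 ω)) - A ω * Y0 ω := by
    funext ω; rcases hAbin ω with h | h <;> rw [hcons ω, h] <;> ring
  have hsplitnum : ∫ ω, A ω * (Y11 ω - Y10 ω) ∂μ
      = ((∫ ω, A ω * Y1 ω ∂μ) - ∫ ω, A ω * (Y10 ω - Y0 ω) ∂μ) - ∫ ω, A ω * Y0 ω ∂μ := by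
    have iSub1 : Integrable (fun ω => A ω * Y1 ω - A ω * (Y10 ω - Y0 ω)) μ := iAY1.sub iAPT
    rw [hdecomp, integral_sub iSub1 iAY0, integral_sub iAY1 iAPT]
  have hcombAll : (∫ ω, A ω * Y1 ω ∂μ) - ∫ ω, A ω * (Y10 ω - Y0 ω) ∂μ
      = ∫ ω, (m11 (X ω) - m10 (X ω) + m00 (X ω))
        * (μ[A | MeasurableSpace.comap X ‹MeasurableSpace 𝒳›]) ω ∂μ := by
    rw [hN1, hN2, ← integral_sub I1 I2]
    exact integral_congr_ae (ae_of_all _ fun ω => by ring)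
  have hRHSsplit : ∫ ω, A ω * (m11 (X ω) - Y0 ω - m10 (X ω) + m00 (X ω)) ∂μ
      = (∫ ω, (m11 (X ω) - m10 (X ω) + m00 (X ω)) * A ω ∂μ) - ∫ ω, A ω * Y0 ω ∂μ := by
    rw [← integral_sub hfg' iAY0]
    exact integral_congr_ae (ae_of_all _ fun ω => by ring)
  have hfinal : ∫ ω in {ω | A ω = 1}, (Y11 ω - Y10 ω) ∂μ
      = ∫ ω, A ω * (m11 (X ω) - Y0 ω - m10 (X ω) + m00 (X ω)) ∂μ := by
    rw [hLHSnum, hsplitnum, hRHSsplit, hRHS1, ← hcombAll]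
  -- the average of A
  have hAint : ∫ ω, A ω ∂μ = (μ {ω | A ω = 1}).toReal := by
    calc ∫ ω, A ω ∂μ
        = ∫ ω, Set.indicator {ω : Ω | A ω = 1} (fun _ => (1:ℝ)) ω ∂μ := by
          refine integral_congr_ae (ae_of_all _ fun ω => ?_)
          rcases hAbin ω with h | h
          · rw [Set.indicator_of_notMem (by simp [h] : ω ∉ {ω : Ω | A ω = 1}), h]
          · rw [Set.indicator_of_mem (by simp [h] : ω ∈ {ω : Ω | A ω = 1}), h]
      _ = (μ {ω | A ω = 1}).toReal := by
          rw [integral_indicator hA1meas, setIntegral_const, smul_eq_mul, mul_one, measureReal_def]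
  have hRHS : ∫ ω, A ω / (μ {ω | A ω = 1}).toReal
        * (m11 (X ω) - Y0 ω - m10 (X ω) + m00 (X ω)) ∂μ
      = ((μ {ω | A ω = 1}).toReal)⁻¹
        * ∫ ω, A ω * (m11 (X ω) - Y0 ω - m10 (X ω) + m00 (X ω)) ∂μ := by
    rw [← integral_const_mul]
    exact integral_congr_ae (ae_of_all _ fun ω => by ring)
  rw [hfinal, hAint, hRHS, div_eq_inv_mul]
end
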